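/- arXiv:1204.3786 — 6 statements merged into one kernel-verified Lean document; each statement's English description precedes it below -/
import Mathlib

section
/- In model M2: X_n = σ_n ε_n with σ_{n+1}² = f(ε_n², σ_n²), f increasing and componentwise convex, and independent innovations, if ε_k² ≤_st ε̃_k² for each k then X_n² ≤_st X̃_n², and if ε_k² ≤_icx ε̃_k² for each k then X_n² ≤_icx X̃_n². -/
/-!
Both orders are handled through integrals of test functions composed with the variables, taken
in `ℝ≥0∞` so that they always exist. For an independent pair `(E, S)` the joint law is a product,
so by Fubini `g (E, S)` can be compared with `g (E', S')` one variable at a time: if `g` is monotone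
(and convex) in each variable, the sections of `ψ ∘ g` are again admissible test functions. Since
`ε_n` is independent of `σ_n`, this propagates `σ_n² ≤ σ̃_n²` along `σ_{n+1}² = f (ε_n², σ_n²)`,
and the same step with `g (e, s) = e s` gives `X_n² ≤ X̃_n²`.

For the increasing convex order the invariant is "infinite mean, or comparison of all monotone
convex test functions"; these test functions are reached from the integrable ones used by `LeIcx`
by approximating them from below by maxima of finitely many tangents.
-/

open MeasureTheory ProbabilityTheory Set

/-- Usual stochastic order. -/
def LeSt {Ω : Type*} [MeasurableSpace Ω] (μ : Measure Ω) (X Y : Ω → ℝ) : Prop :=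
  ∀ φ : ℝ → ℝ, Monotone φ → Integrable (φ ∘ X) μ → Integrable (φ ∘ Y) μ →
    ∫ ω, φ (X ω) ∂μ ≤ ∫ ω, φ (Y ω) ∂μ

/-- Increasing convex order. -/
def LeIcx {Ω : Type*} [MeasurableSpace Ω] (μ : Measure Ω) (X Y : Ω → ℝ) : Prop :=
  ∀ φ : ℝ → ℝ, Monotone φ → ConvexOn ℝ Set.univ φ →
    Integrable (φ ∘ X) μ → Integrable (φ ∘ Y) μ →
    ∫ ω, φ (X ω) ∂μ ≤ ∫ ω, φ (Y ω) ∂μ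

open scoped ENNReal

lemma range_max_zero : range (fun x : ℝ => max x 0) = Ici 0 :=
  Subset.antisymm (range_subset_iff.2 fun x => le_max_right x 0)
    fun y hy => ⟨y, max_eq_left hy⟩

section PosPartExtension

variable {k : ℝ → ℝ}

lemma MonotoneOn.comp_max_zero (hk : MonotoneOn k (Ici 0)) : Monotone fun x => k (max x 0) :=
  fun _ _ hab => hk (mem_Ici.2 (le_max_right _ 0)) (mem_Ici.2 (le_max_right _ 0))
    (max_le_max_right 0 hab)

lemma ConvexOn.comp_max_zero (hm : MonotoneOn k (Ici 0)) (hc : ConvexOn ℝ (Ici 0) k) :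
    ConvexOn ℝ univ fun x => k (max x 0) := by
  have himage : (fun x : ℝ => max x 0) '' univ = Ici 0 := by rw [image_univ, range_max_zero]
  rw [← himage] at hm hc
  exact hc.comp ((convexOn_id convex_univ).sup (convexOn_const 0 convex_univ)) hm

end PosPartExtension

lemma ConvexOn.comp_of_monotone {E : Type*} [AddCommMonoid E] [Module ℝ E] {s : Set E}
    {ψ : ℝ → ℝ} {k : E → ℝ} (hψ : ConvexOn ℝ univ ψ) (hψm : Monotone ψ) (hk : ConvexOn ℝ s k) :
    ConvexOn ℝ s (ψ ∘ k) :=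
  ⟨hk.1, fun _ hx _ hy _ _ ha hb hab =>
    (hψm (hk.2 hx hy ha hb hab)).trans (hψ.2 trivial trivial ha hb hab)⟩

/-- Convexity gives continuity in the second variable, so `g` is a Carathéodory function. -/
lemma measurable_uncurry_of_monotone_of_convexOn {g : ℝ → ℝ → ℝ}
    (hmono : ∀ s, Monotone (g · s)) (hconv : ∀ e, ConvexOn ℝ univ (g e)) :
    Measurable (Function.uncurry g) := by
  have hcont : ∀ e, Continuous (g e) := fun e =>
    continuousOn_univ.1 ((hconv e).continuousOn isOpen_univ)
  exact (measurable_uncurry_of_continuous_of_measurable (u := fun s e => g e s) hcont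
    fun s => (hmono s).measurable).comp measurable_swap

section Tangents

variable {ψ : ℝ → ℝ}

lemma ConvexOn.add_rightDeriv_mul_sub_le (hψ : ConvexOn ℝ univ ψ) (r x : ℝ) :
    ψ r + derivWithin ψ (Ioi r) r * (x - r) ≤ ψ x := by
  rcases lt_trichotomy x r with hxr | rfl | hrx
  · have h := (hψ.slope_le_leftDeriv_of_mem_interior (mem_univ x) (by simp) hxr).trans
      (hψ.leftDeriv_le_rightDeriv_of_mem_interior (by simp))
    rw [slope_def_field, div_le_iff₀ (sub_pos.2 hxr)] at h
    nlinarith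
  · simp
  · have h := hψ.rightDeriv_le_slope_of_mem_interior (by simp) (mem_univ x) hrx
    rw [slope_def_field, le_div_iff₀ (sub_pos.2 hrx)] at h
    linarith

noncomputable def posTangent (ψ : ℝ → ℝ) (r x : ℝ) : ℝ :=
  max (ψ r + derivWithin ψ (Ioi r) r * (x - r)) 0

noncomputable def tangentSup (ψ : ℝ → ℝ) (q : ℕ → ℝ) (n : ℕ) : ℝ → ℝ :=
  partialSups (fun i => posTangent ψ (q i)) n

lemma posTangent_nonneg (r x : ℝ) : 0 ≤ posTangent ψ r x := le_max_right _ _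

lemma ConvexOn.posTangent_le (hψ : ConvexOn ℝ univ ψ) (r x : ℝ) :
    posTangent ψ r x ≤ max (ψ x) 0 :=
  max_le_max_right 0 (hψ.add_rightDeriv_mul_sub_le r x)

lemma Monotone.monotone_posTangent (hψ : Monotone ψ) (r : ℝ) : Monotone (posTangent ψ r) :=
  fun _ _ hab => max_le_max_right 0 (by
    have := (hψ.monotoneOn (Ioi r)).derivWithin_nonneg (x := r)
    nlinarith)

lemma convexOn_posTangent (r : ℝ) : ConvexOn ℝ univ (posTangent ψ r) := by
  refine ConvexOn.sup ⟨convex_univ, fun x _ y _ a b _ _ hab => le_of_eq ?_⟩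
    (convexOn_const 0 convex_univ)
  simp only [smul_eq_mul]
  linear_combination (derivWithin ψ (Ioi r) r * r - ψ r) * hab

end Tangents

section TangentSup

variable {ψ : ℝ → ℝ} {q : ℕ → ℝ}

lemma tangentSup_zero : tangentSup ψ q 0 = posTangent ψ (q 0) := partialSups_zero _

lemma tangentSup_succ (n : ℕ) :
    tangentSup ψ q (n + 1) = tangentSup ψ q n ⊔ posTangent ψ (q (n + 1)) :=
  partialSups_succ _ _

lemma monotone_tangentSup : Monotone (tangentSup ψ q) := (partialSups _).monotone

lemma posTangent_le_tangentSup (n : ℕ) : posTangent ψ (q n) ≤ tangentSup ψ q n :=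
  le_partialSups (fun i => posTangent ψ (q i)) n

lemma Monotone.tangentSup (hψ : Monotone ψ) (n : ℕ) : Monotone (tangentSup ψ q n) := by
  induction n with
  | zero => rw [tangentSup_zero]; exact hψ.monotone_posTangent _
  | succ n ih => rw [tangentSup_succ]; exact ih.sup (hψ.monotone_posTangent _)

lemma convexOn_tangentSup (n : ℕ) : ConvexOn ℝ univ (tangentSup ψ q n) := by
  induction n with
  | zero => rw [tangentSup_zero]; exact convexOn_posTangent _
  | succ n ih => rw [tangentSup_succ]; exact ih.sup (convexOn_posTangent _)

lemma tangentSup_nonneg (n : ℕ) (x : ℝ) : 0 ≤ tangentSup ψ q n x :=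
  (posTangent_nonneg _ x).trans (posTangent_le_tangentSup n x)

lemma ConvexOn.tangentSup_le (hψ : ConvexOn ℝ univ ψ) (n : ℕ) (x : ℝ) :
    tangentSup ψ q n x ≤ max (ψ x) 0 :=
  partialSups_le _ n (fun x => max (ψ x) 0) (fun i _ => hψ.posTangent_le (q i)) x

lemma MeasureTheory.Integrable.tangentSup_comp {Ω : Type*} [MeasurableSpace Ω] {μ : Measure Ω}
    [IsFiniteMeasure μ] {X : Ω → ℝ} (hX : Integrable X μ) (n : ℕ) :
    Integrable (fun ω => tangentSup ψ q n (X ω)) μ := by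
  have hpos : ∀ r, Integrable (fun ω => posTangent ψ r (X ω)) μ := fun r =>
    ((integrable_const _).add ((hX.sub (integrable_const r)).const_mul _)).sup
      (integrable_const 0)
  induction n with
  | zero => simpa only [tangentSup_zero] using hpos (q 0)
  | succ n ih => rw [tangentSup_succ]; exact ih.sup (hpos (q (n + 1)))

/-- Tangents at points `q n < x` have nonnegative slope, so by continuity their values at `x`
come arbitrarily close to `ψ x`. -/
lemma iSup_ofReal_tangentSup (hm : Monotone ψ) (hc : ConvexOn ℝ univ ψ) (hq : DenseRange q)
    (x : ℝ) : ⨆ n, ENNReal.ofReal (tangentSup ψ q n x) = ENNReal.ofReal (ψ x) := by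
  refine le_antisymm (iSup_le fun n => ?_) (le_of_forall_lt fun c hc' => ?_)
  · exact (ENNReal.ofReal_le_ofReal (hc.tangentSup_le n x)).trans_eq (by simp)
  have hcx : c.toReal < ψ x := (ENNReal.lt_ofReal_iff_toReal_lt hc'.ne_top).1 hc'
  have hcont : Continuous ψ := continuousOn_univ.1 (hc.continuousOn isOpen_univ)
  obtain ⟨n, hnx, hn⟩ : ∃ n, q n < x ∧ c.toReal < ψ (q n) := by
    refine hq.exists_mem_open (isOpen_Iio.inter (isOpen_lt continuous_const hcont)) ?_
    exact (((hcont.continuousAt.eventually (lt_mem_nhds hcx)).filter_mono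
      nhdsWithin_le_nhds).and (self_mem_nhdsWithin (s := Iio x))).exists.imp
      fun y hy => ⟨hy.2, hy.1⟩
  have hslope := (hm.monotoneOn (Ioi (q n))).derivWithin_nonneg (x := q n)
  have hle : ψ (q n) ≤ tangentSup ψ q n x :=
    le_trans (by nlinarith) ((le_max_left _ _).trans (posTangent_le_tangentSup n x))
  calc c = ENNReal.ofReal c.toReal := (ENNReal.ofReal_toReal hc'.ne_top).symm
    _ < ENNReal.ofReal (tangentSup ψ q n x) :=
      (ENNReal.ofReal_lt_ofReal_iff_of_nonneg ENNReal.toReal_nonneg).2 (hn.trans_le hle)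
    _ ≤ _ := le_iSup (fun n => ENNReal.ofReal (tangentSup ψ q n x)) n

end TangentSup

structure MonotoneConvexSections (g : ℝ → ℝ → ℝ) : Prop where
  monotone_left : ∀ s, Monotone (g · s)
  monotone_right : ∀ e, Monotone (g e)
  convexOn_left : ∀ s, ConvexOn ℝ univ (g · s)
  convexOn_right : ∀ e, ConvexOn ℝ univ (g e)

def quadrantExt (f : ℝ → ℝ → ℝ) (a b : ℝ) : ℝ := f (max a 0) (max b 0)

lemma quadrantExt_of_nonneg (f : ℝ → ℝ → ℝ) {a b : ℝ} (ha : 0 ≤ a) (hb : 0 ≤ b) :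
    quadrantExt f a b = f a b := by
  rw [quadrantExt, max_eq_left ha, max_eq_left hb]

namespace MonotoneConvexSections

variable {g : ℝ → ℝ → ℝ}

lemma measurable (hg : MonotoneConvexSections g) : Measurable (Function.uncurry g) :=
  measurable_uncurry_of_monotone_of_convexOn hg.monotone_left hg.convexOn_right

lemma swap (hg : MonotoneConvexSections g) : MonotoneConvexSections fun s e => g e s :=
  ⟨hg.monotone_right, hg.monotone_left, hg.convexOn_right, hg.convexOn_left⟩

lemma quadrantExt {f : ℝ → ℝ → ℝ}
    (hf_mono : MonotoneOn (fun p : ℝ × ℝ => f p.1 p.2) (Ici 0 ×ˢ Ici 0))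
    (hf_cx1 : ∀ y ∈ Ici (0:ℝ), ConvexOn ℝ (Ici (0:ℝ)) (fun x => f x y))
    (hf_cx2 : ∀ x ∈ Ici (0:ℝ), ConvexOn ℝ (Ici (0:ℝ)) (fun y => f x y)) :
    MonotoneConvexSections (quadrantExt f) := by
  have h₁ : ∀ y ∈ Ici (0:ℝ), MonotoneOn (fun x => f x y) (Ici 0) := fun y hy a ha b hb hab =>
    hf_mono (mk_mem_prod ha hy) (mk_mem_prod hb hy) ⟨hab, le_rfl⟩
  have h₂ : ∀ x ∈ Ici (0:ℝ), MonotoneOn (fun y => f x y) (Ici 0) := fun x hx a ha b hb hab =>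
    hf_mono (mk_mem_prod hx ha) (mk_mem_prod hx hb) ⟨le_rfl, hab⟩
  have hpos : ∀ x : ℝ, max x 0 ∈ Ici 0 := fun x => le_max_right x 0
  exact ⟨fun s => (h₁ _ (hpos s)).comp_max_zero, fun e => (h₂ _ (hpos e)).comp_max_zero,
    fun s => (hf_cx1 _ (hpos s)).comp_max_zero (h₁ _ (hpos s)),
    fun e => (hf_cx2 _ (hpos e)).comp_max_zero (h₂ _ (hpos e))⟩

lemma quadrantExt_mul : MonotoneConvexSections (_root_.quadrantExt (· * ·)) := by
  refine quadrantExt (fun p hp q hq hpq => mul_le_mul hpq.1 hpq.2 hp.2 (hp.1.trans hpq.1))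
    (fun y _ => ⟨convex_Ici 0, fun _ _ _ _ a b _ _ _ => le_of_eq ?_⟩)
    (fun x _ => ⟨convex_Ici 0, fun _ _ _ _ a b _ _ _ => le_of_eq ?_⟩) <;>
  simp only [smul_eq_mul] <;> ring

end MonotoneConvexSections

section Orders

variable {Ω : Type*} [MeasurableSpace Ω] (μ : Measure Ω)

def LeStLintegral (X Y : Ω → ℝ) : Prop :=
  ∀ ψ : ℝ → ℝ≥0∞, Monotone ψ → ∫⁻ ω, ψ (X ω) ∂μ ≤ ∫⁻ ω, ψ (Y ω) ∂μ

def LeIcxLintegral (X Y : Ω → ℝ) : Prop :=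
  ∀ ψ : ℝ → ℝ, Monotone ψ → ConvexOn ℝ univ ψ →
    ∫⁻ ω, ENNReal.ofReal (ψ (X ω)) ∂μ ≤ ∫⁻ ω, ENNReal.ofReal (ψ (Y ω)) ∂μ

/-- For nonnegative variables this is equivalent to `LeIcx` (which only tests integrable functions,
hence is vacuous beyond constants when `X` has infinite mean), and it propagates through the
recursion. -/
def LeIcxOrMeanTop (X Y : Ω → ℝ) : Prop :=
  ∫⁻ ω, ENNReal.ofReal (X ω) ∂μ = ⊤ ∨ LeIcxLintegral μ X Y

end Orders

section Integrals

variable {Ω : Type*} [MeasurableSpace Ω] {μ : Measure Ω} {X Y Z : Ω → ℝ}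

lemma lintegral_ofReal_comp_le_of_integral_le {φ : ℝ → ℝ} (hφ : ∀ x, 0 ≤ φ x)
    (hX : Integrable (fun ω => φ (X ω)) μ) (hY : Integrable (fun ω => φ (Y ω)) μ)
    (h : ∫ ω, φ (X ω) ∂μ ≤ ∫ ω, φ (Y ω) ∂μ) :
    ∫⁻ ω, ENNReal.ofReal (φ (X ω)) ∂μ ≤ ∫⁻ ω, ENNReal.ofReal (φ (Y ω)) ∂μ := by
  rw [← ofReal_integral_eq_lintegral_ofReal hX (ae_of_all _ fun ω => hφ (X ω)),
    ← ofReal_integral_eq_lintegral_ofReal hY (ae_of_all _ fun ω => hφ (Y ω))]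
  exact ENNReal.ofReal_le_ofReal h

lemma lintegral_iSup_ofReal_comp_le {K : ℕ → ℝ → ℝ} (hK : ∀ n, Measurable (K n))
    (hmono : Monotone K) (hX : Measurable X) (hY : Measurable Y)
    (h : ∀ n, ∫⁻ ω, ENNReal.ofReal (K n (X ω)) ∂μ ≤ ∫⁻ ω, ENNReal.ofReal (K n (Y ω)) ∂μ) :
    ∫⁻ ω, ⨆ n, ENNReal.ofReal (K n (X ω)) ∂μ ≤ ∫⁻ ω, ⨆ n, ENNReal.ofReal (K n (Y ω)) ∂μ := by
  have hmeas : ∀ {W : Ω → ℝ}, Measurable W → ∀ n,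
      Measurable fun ω => ENNReal.ofReal (K n (W ω)) :=
    fun hW n => ENNReal.measurable_ofReal.comp ((hK n).comp hW)
  rw [lintegral_iSup (hmeas hX) fun _ _ hnm ω => ENNReal.ofReal_le_ofReal (hmono hnm _),
    lintegral_iSup (hmeas hY) fun _ _ hnm ω => ENNReal.ofReal_le_ofReal (hmono hnm _)]
  exact iSup_mono h

lemma convexOn_integral {E : Type*} [AddCommMonoid E] [Module ℝ E] {s : Set E} (hs : Convex ℝ s)
    {F : E → Ω → ℝ} (hF : ∀ ω, ConvexOn ℝ s (F · ω)) (hi : ∀ x ∈ s, Integrable (F x) μ) :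
    ConvexOn ℝ s fun x => ∫ ω, F x ω ∂μ := by
  refine ⟨hs, fun x hx y hy a b ha hb hab => ?_⟩
  have hxy := ((hi x hx).const_mul a).add ((hi y hy).const_mul b)
  calc ∫ ω, F (a • x + b • y) ω ∂μ ≤ ∫ ω, (a * F x ω + b * F y ω) ∂μ :=
        integral_mono (hi _ (hs hx hy ha hb hab)) hxy fun ω => (hF ω).2 hx hy ha hb hab
    _ = a • ∫ ω, F x ω ∂μ + b • ∫ ω, F y ω ∂μ := by
        rw [integral_add ((hi x hx).const_mul a) ((hi y hy).const_mul b), integral_const_mul,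
          integral_const_mul, smul_eq_mul, smul_eq_mul]

lemma ProbabilityTheory.IndepFun.lintegral_comp_eq_lintegral_lintegral [IsFiniteMeasure μ]
    {α β : Type*} [MeasurableSpace α] [MeasurableSpace β] {E : Ω → α} {S : Ω → β}
    (hE : Measurable E) (hS : Measurable S) (h : IndepFun E S μ) {Φ : α → β → ℝ≥0∞}
    (hΦ : Measurable (Function.uncurry Φ)) :
    ∫⁻ ω, Φ (E ω) (S ω) ∂μ = ∫⁻ ω', ∫⁻ ω, Φ (E ω) (S ω') ∂μ ∂μ := by
  have hmap := (indepFun_iff_map_prod_eq_prod_map_map hE.aemeasurable hS.aemeasurable).1 h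
  calc ∫⁻ ω, Φ (E ω) (S ω) ∂μ = ∫⁻ p, Function.uncurry Φ p ∂(μ.map fun ω => (E ω, S ω)) :=
        (lintegral_map hΦ (hE.prodMk hS)).symm
    _ = ∫⁻ s, ∫⁻ e, Φ e s ∂(μ.map E) ∂(μ.map S) := by
        rw [hmap, lintegral_prod_symm _ hΦ.aemeasurable]; rfl
    _ = _ := by
        rw [lintegral_map (f := fun s => ∫⁻ e, Φ e s ∂(μ.map E)) hΦ.lintegral_prod_left' hS]
        exact lintegral_congr fun ω' => lintegral_map (hΦ.comp measurable_prodMk_right) hE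

variable [IsProbabilityMeasure μ]

lemma integral_comp_eq_add_toReal_lintegral (hZ : ∀ ω, 0 ≤ Z ω) {φ : ℝ → ℝ} (hφ : Monotone φ)
    (hI : Integrable (fun ω => φ (Z ω)) μ) :
    ∫ ω, φ (Z ω) ∂μ = φ 0 + (∫⁻ ω, ENNReal.ofReal (φ (Z ω) - φ 0) ∂μ).toReal := by
  have hsub : Integrable (fun ω => φ (Z ω) - φ 0) μ := hI.sub (integrable_const _)
  rw [← integral_eq_lintegral_of_nonneg_ae (ae_of_all _ fun ω => sub_nonneg.2 (hφ (hZ ω)))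
    hsub.aestronglyMeasurable, integral_sub hI (integrable_const _)]
  simp

lemma exists_pos_mul_le_add {k : ℝ → ℝ} (hm : MonotoneOn k (Ici 0)) (hc : ConvexOn ℝ (Ici 0) k)
    {x₀ : ℝ} (hx₀ : 0 ≤ x₀) (hne : k x₀ ≠ k 0) :
    ∃ a > 0, ∃ c, ∀ y, 0 ≤ y → a * y ≤ k y + c := by
  have hx₀' : 0 < x₀ := hx₀.lt_of_ne (by rintro rfl; exact hne rfl)
  have hk : k 0 < k x₀ := (hm self_mem_Ici hx₀ hx₀).lt_of_ne hne.symm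
  refine ⟨(k x₀ - k 0) / x₀, div_pos (sub_pos.2 hk) hx₀', k x₀ - 2 * k 0, fun y hy => ?_⟩
  have hk0 : k 0 ≤ k y := hm self_mem_Ici hy hy
  rcases le_total y x₀ with hyx | hxy
  · have : (k x₀ - k 0) / x₀ * y ≤ (k x₀ - k 0) / x₀ * x₀ :=
      mul_le_mul_of_nonneg_left hyx (div_pos (sub_pos.2 hk) hx₀').le
    rw [div_mul_cancel₀ _ hx₀'.ne'] at this
    linarith
  · have hs := hc.secant_mono self_mem_Ici hx₀ hy hx₀'.ne' (hx₀'.trans_le hxy).ne' hxy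
    simp only [sub_zero] at hs
    rw [le_div_iff₀ (hx₀'.trans_le hxy)] at hs
    linarith

lemma eqOn_or_lintegral_ofReal_comp_eq_top {k : ℝ → ℝ} (hm : MonotoneOn k (Ici 0))
    (hc : ConvexOn ℝ (Ici 0) k) (hZ : ∀ ω, 0 ≤ Z ω)
    (htop : ∫⁻ ω, ENNReal.ofReal (Z ω) ∂μ = ⊤) :
    (∀ x, 0 ≤ x → k x = k 0) ∨ ∫⁻ ω, ENNReal.ofReal (k (Z ω)) ∂μ = ⊤ := by
  refine or_iff_not_imp_left.2 fun hne => ?_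
  push Not at hne
  obtain ⟨x₀, hx₀, hne⟩ := hne
  obtain ⟨a, ha, c, hac⟩ := exists_pos_mul_le_add hm hc hx₀ hne
  have key : ⊤ ≤ ∫⁻ ω, ENNReal.ofReal (k (Z ω)) ∂μ + ENNReal.ofReal c :=
    calc ⊤ = ENNReal.ofReal a * ∫⁻ ω, ENNReal.ofReal (Z ω) ∂μ := by
          rw [htop, ENNReal.mul_top (by simpa using ha)]
      _ = ∫⁻ ω, ENNReal.ofReal a * ENNReal.ofReal (Z ω) ∂μ :=
          (lintegral_const_mul' _ _ ENNReal.ofReal_ne_top).symm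
      _ ≤ ∫⁻ ω, (ENNReal.ofReal (k (Z ω)) + ENNReal.ofReal c) ∂μ := lintegral_mono fun ω => by
          rw [← ENNReal.ofReal_mul ha.le]
          exact (ENNReal.ofReal_le_ofReal (hac _ (hZ ω))).trans ENNReal.ofReal_add_le
      _ = _ := by rw [lintegral_add_right _ measurable_const, lintegral_const, measure_univ,
          mul_one]
  by_contra hfin
  exact (ENNReal.add_lt_top.2 ⟨lt_top_iff_ne_top.2 hfin, ENNReal.ofReal_lt_top⟩).ne
    (top_le_iff.1 key)

end Integrals

section Conversions

variable {Ω : Type*} [MeasurableSpace Ω] {μ : Measure Ω} [IsProbabilityMeasure μ] {X Y : Ω → ℝ}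

lemma LeSt.leStLintegral (hX : Measurable X) (hY : Measurable Y) (h : LeSt μ X Y) :
    LeStLintegral μ X Y := by
  intro ψ hψ
  set K : ℕ → ℝ → ℝ := fun n x => (ψ x ⊓ n).toReal
  have hfin : ∀ (n : ℕ) x, ψ x ⊓ n ≠ ⊤ := fun n x => ne_top_of_le_ne_top (by simp) inf_le_right
  have hK : ∀ n, Monotone (K n) := fun n a b hab =>
    ENNReal.toReal_mono (hfin n b) (inf_le_inf_right _ (hψ hab))
  have hKmono : Monotone K := fun n m hnm x =>
    ENNReal.toReal_mono (hfin m x) (inf_le_inf_left _ (by exact_mod_cast hnm))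
  have hsup : ∀ x, ⨆ n, ENNReal.ofReal (K n x) = ψ x := fun x => by
    rw [iSup_congr fun n => ENNReal.ofReal_toReal (hfin n x), ← inf_iSup_eq,
      ENNReal.iSup_natCast, inf_top_eq]
  have hint : ∀ {W : Ω → ℝ}, Measurable W → ∀ n, Integrable (fun ω => K n (W ω)) μ :=
    fun hW n => .of_bound ((hK n).measurable.comp hW).aestronglyMeasurable n
      (ae_of_all _ fun ω => by
        rw [Real.norm_of_nonneg ENNReal.toReal_nonneg]
        exact (ENNReal.toReal_mono (by simp) inf_le_right).trans_eq (by simp))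
  simpa only [hsup] using lintegral_iSup_ofReal_comp_le (fun n => (hK n).measurable) hKmono hX hY
    fun n => lintegral_ofReal_comp_le_of_integral_le (fun _ => ENNReal.toReal_nonneg)
      (hint hX n) (hint hY n) (h _ (hK n) (hint hX n) (hint hY n))

lemma LeStLintegral.leSt (hX : ∀ ω, 0 ≤ X ω) (hY : ∀ ω, 0 ≤ Y ω) (h : LeStLintegral μ X Y) :
    LeSt μ X Y := by
  intro φ hφ hIX hIY
  rw [integral_comp_eq_add_toReal_lintegral hX hφ hIX,
    integral_comp_eq_add_toReal_lintegral hY hφ hIY]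
  exact (add_le_add_iff_left _).2 (ENNReal.toReal_mono
    (hIY.sub (integrable_const _)).lintegral_lt_top.ne
    (h _ fun a b hab => ENNReal.ofReal_le_ofReal (sub_le_sub_right (hφ hab) _)))

lemma LeIcx.leIcxOrMeanTop (hXm : Measurable X) (hYm : Measurable Y) (hX : ∀ ω, 0 ≤ X ω)
    (hY : ∀ ω, 0 ≤ Y ω) (h : LeIcx μ X Y) : LeIcxOrMeanTop μ X Y := by
  refine or_iff_not_imp_left.2 fun hXtop ψ hψ hc => ?_
  by_cases hYtop : ∫⁻ ω, ENNReal.ofReal (Y ω) ∂μ = ⊤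
  · rcases eqOn_or_lintegral_ofReal_comp_eq_top (hψ.monotoneOn _)
      (hc.subset (subset_univ _) (convex_Ici 0)) hY hYtop with hconst | htop
    · exact lintegral_mono fun ω => ENNReal.ofReal_le_ofReal
        ((hconst _ (hX ω)).trans_le (hψ (hY ω)))
    · exact htop ▸ le_top
  have hint : ∀ {W : Ω → ℝ}, Measurable W → (∀ ω, 0 ≤ W ω) →
      ∫⁻ ω, ENNReal.ofReal (W ω) ∂μ ≠ ⊤ → Integrable W μ := fun hWm hW hfin =>
    (lintegral_ofReal_ne_top_iff_integrable hWm.aestronglyMeasurable (ae_of_all _ hW)).1 hfin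
  have hXi := hint hXm hX hXtop
  have hYi := hint hYm hY hYtop
  obtain ⟨q, hq⟩ := TopologicalSpace.exists_dense_seq ℝ
  simp only [← iSup_ofReal_tangentSup (q := q) hψ hc hq]
  refine lintegral_iSup_ofReal_comp_le (fun n => (hψ.tangentSup n).measurable)
    monotone_tangentSup hXm hYm fun n => ?_
  exact lintegral_ofReal_comp_le_of_integral_le (tangentSup_nonneg n) (hXi.tangentSup_comp n)
    (hYi.tangentSup_comp n) (h _ (hψ.tangentSup n) (convexOn_tangentSup n)
      (hXi.tangentSup_comp n) (hYi.tangentSup_comp n))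

lemma LeIcxOrMeanTop.leIcx (hX : ∀ ω, 0 ≤ X ω) (hY : ∀ ω, 0 ≤ Y ω)
    (h : LeIcxOrMeanTop μ X Y) : LeIcx μ X Y := by
  intro φ hφ hc hIX hIY
  rcases h with htop | h
  · rcases eqOn_or_lintegral_ofReal_comp_eq_top (hφ.monotoneOn _)
      (hc.subset (subset_univ _) (convex_Ici 0)) hX htop with hconst | htop'
    · calc ∫ ω, φ (X ω) ∂μ = ∫ _, φ 0 ∂μ :=
            integral_congr_ae (ae_of_all _ fun ω => hconst _ (hX ω))
        _ ≤ ∫ ω, φ (Y ω) ∂μ := integral_mono (integrable_const _) hIY fun ω => hφ (hY ω)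
    · exact absurd htop' hIX.lintegral_lt_top.ne
  rw [integral_comp_eq_add_toReal_lintegral hX hφ hIX,
    integral_comp_eq_add_toReal_lintegral hY hφ hIY]
  exact (add_le_add_iff_left _).2 (ENNReal.toReal_mono
    (hIY.sub (integrable_const _)).lintegral_lt_top.ne
    (h _ (fun a b hab => sub_le_sub_right (hφ hab) _) (hc.sub (concaveOn_const _ convex_univ))))

end Conversions

section Steps

variable {Ω : Type*} [MeasurableSpace Ω] {μ : Measure Ω}

lemma LeIcxOrMeanTop.congr_left {X X' Y : Ω → ℝ} (h : LeIcxOrMeanTop μ X Y) (hX : X =ᵐ[μ] X') :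
    LeIcxOrMeanTop μ X' Y := by
  have hcongr : ∀ φ : ℝ → ℝ, ∫⁻ ω, ENNReal.ofReal (φ (X ω)) ∂μ =
      ∫⁻ ω, ENNReal.ofReal (φ (X' ω)) ∂μ :=
    fun φ => lintegral_congr_ae (hX.mono fun ω hω => by simp only [hω])
  rcases h with htop | h
  · exact Or.inl ((hcongr id).symm.trans htop)
  · exact Or.inr fun ψ hψ hc => (hcongr ψ).symm.trans_le (h ψ hψ hc)

lemma LeIcxOrMeanTop.mono_right {X Y Y' : Ω → ℝ} (h : LeIcxOrMeanTop μ X Y)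
    (hY : ∀ ω, Y ω ≤ Y' ω) : LeIcxOrMeanTop μ X Y' :=
  h.imp_right fun h ψ hψ hc => (h ψ hψ hc).trans
    (lintegral_mono fun ω => ENNReal.ofReal_le_ofReal (hψ (hY ω)))

variable [IsProbabilityMeasure μ] {E S E' S' : Ω → ℝ} {g : ℝ → ℝ → ℝ}

lemma LeStLintegral.comp₂ (hE : Measurable E) (hS : Measurable S) (hE' : Measurable E')
    (hS' : Measurable S') (hI : IndepFun E S μ) (hI' : IndepFun E' S' μ)
    (hg : Measurable (Function.uncurry g)) (hg₁ : ∀ s, Monotone (g · s))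
    (hg₂ : ∀ e, Monotone (g e)) (hEE : LeStLintegral μ E E') (hSS : LeStLintegral μ S S') :
    LeStLintegral μ (fun ω => g (E ω) (S ω)) (fun ω => g (E' ω) (S' ω)) := by
  intro ψ hψ
  have hΦ : Measurable (Function.uncurry fun e s => ψ (g e s)) := hψ.measurable.comp hg
  calc ∫⁻ ω, ψ (g (E ω) (S ω)) ∂μ = ∫⁻ ω', ∫⁻ ω, ψ (g (E ω) (S ω')) ∂μ ∂μ :=
        hI.lintegral_comp_eq_lintegral_lintegral hE hS hΦ
    _ ≤ ∫⁻ ω', ∫⁻ ω, ψ (g (E' ω) (S ω')) ∂μ ∂μ :=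
        lintegral_mono fun _ => hEE _ (hψ.comp (hg₁ _))
    _ = ∫⁻ ω, ∫⁻ ω', ψ (g (E' ω) (S ω')) ∂μ ∂μ :=
        lintegral_lintegral_swap (hΦ.comp ((hE'.comp measurable_snd).prodMk
          (hS.comp measurable_fst))).aemeasurable
    _ ≤ ∫⁻ ω, ∫⁻ ω', ψ (g (E' ω) (S' ω')) ∂μ ∂μ :=
        lintegral_mono fun _ => hSS _ (hψ.comp (hg₂ _))
    _ = ∫⁻ ω, ψ (g (E' ω) (S' ω)) ∂μ :=
        (hI'.symm.lintegral_comp_eq_lintegral_lintegral hS' hE' (Φ := fun s e => ψ (g e s))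
          (hΦ.comp measurable_swap)).symm

lemma LeIcxOrMeanTop.comp {k : ℝ → ℝ} (hk : Monotone k) (hc : ConvexOn ℝ univ k)
    (hS : ∀ ω, 0 ≤ S ω) (hS' : ∀ ω, 0 ≤ S' ω) (h : LeIcxOrMeanTop μ S S') :
    LeIcxOrMeanTop μ (fun ω => k (S ω)) (fun ω => k (S' ω)) := by
  rcases h with htop | h
  · rcases eqOn_or_lintegral_ofReal_comp_eq_top (hk.monotoneOn _)
      (hc.subset (subset_univ _) (convex_Ici 0)) hS htop with hconst | htop'
    · exact Or.inr fun ψ hψ _ => lintegral_mono fun ω => ENNReal.ofReal_le_ofReal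
        (hψ ((hconst _ (hS ω)).trans_le (hk (hS' ω))))
    · exact Or.inl htop'
  · exact Or.inr fun ψ hψ hψc => h _ (hψ.comp hk) (hψc.comp_of_monotone hψ hc)

/-- If `E` has infinite mean, either almost every section `g · (S ω)` is constant on `[0, ∞)`, so
that `g (E, S) = g (0, S)` almost surely, or `g (E, S)` has infinite mean. -/
lemma LeIcxOrMeanTop.comp₂_of_lintegral_eq_top (hEm : Measurable E) (hSm : Measurable S)
    (hE : ∀ ω, 0 ≤ E ω) (hE' : ∀ ω, 0 ≤ E' ω) (hS : ∀ ω, 0 ≤ S ω) (hS' : ∀ ω, 0 ≤ S' ω)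
    (hI : IndepFun E S μ) (hg : MonotoneConvexSections g)
    (htop : ∫⁻ ω, ENNReal.ofReal (E ω) ∂μ = ⊤)
    (hSS : LeIcxOrMeanTop μ S S') :
    LeIcxOrMeanTop μ (fun ω => g (E ω) (S ω)) (fun ω => g (E' ω) (S' ω)) := by
  by_cases hconst : ∀ᵐ ω ∂μ, ∀ e, 0 ≤ e → g e (S ω) = g 0 (S ω)
  · exact ((hSS.comp (hg.monotone_right 0) (hg.convexOn_right 0) hS hS').congr_left
      (hconst.mono fun ω h => (h _ (hE ω)).symm)).mono_right fun ω => hg.monotone_left _ (hE' ω)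
  left
  have hΦ : Measurable (Function.uncurry fun e s => ENNReal.ofReal (g e s)) :=
    ENNReal.measurable_ofReal.comp hg.measurable
  rw [hI.lintegral_comp_eq_lintegral_lintegral hEm hSm hΦ]
  refine lintegral_eq_top_of_measure_eq_top_ne_zero
    (hΦ.comp (hEm.prodMap hSm)).lintegral_prod_left'.aemeasurable ?_
  rw [ae_iff] at hconst
  refine fun h0 => hconst (measure_mono_null (fun ω' hω' => ?_) h0)
  exact (eqOn_or_lintegral_ofReal_comp_eq_top ((hg.monotone_left _).monotoneOn _)
    ((hg.convexOn_left _).subset (subset_univ _) (convex_Ici 0)) hE htop).resolve_left hω'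

/-- Truncating `Z` at `N` makes the integral finite while keeping it monotone and convex in `s`. -/
lemma exists_monotone_convexOn_iSup_eq_lintegral {F : ℝ → ℝ → ℝ} {Z : Ω → ℝ}
    (hZ : Measurable Z) (hF₁ : ∀ s, Monotone (F · s)) (hF₂ : ∀ e, Monotone (F e))
    (hc : ∀ e, ConvexOn ℝ univ (F e)) :
    ∃ K : ℕ → ℝ → ℝ, Monotone K ∧ (∀ N, Monotone (K N)) ∧ (∀ N, ConvexOn ℝ univ (K N)) ∧
      ∀ s, ⨆ N, ENNReal.ofReal (K N s) = ∫⁻ ω, ENNReal.ofReal (F (Z ω) s) ∂μ := by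
  set T : ℕ → ℝ → Ω → ℝ := fun N s ω => max (F (min (Z ω) N) s) 0
  have hTm : ∀ N s, Measurable (T N s) := fun N s =>
    ((hF₁ s).measurable.comp (hZ.min measurable_const)).max measurable_const
  have hTi : ∀ N s, Integrable (T N s) μ := fun N s =>
    .of_bound (hTm N s).aestronglyMeasurable (max (F N s) 0) (ae_of_all _ fun ω => by
      rw [Real.norm_of_nonneg (le_max_right _ _)]
      exact max_le_max_right 0 (hF₁ s (min_le_right _ _)))
  have hmonoN : ∀ s z, Monotone fun N : ℕ => F (min z N) s := fun s z N M hNM =>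
    hF₁ s (min_le_min_left _ (Nat.cast_le.2 hNM))
  refine ⟨fun N s => ∫ ω, T N s ω ∂μ,
    fun N M hNM s => integral_mono (hTi N s) (hTi M s) fun ω =>
      max_le_max_right 0 (hmonoN s _ hNM),
    fun N a b hab => integral_mono (hTi N a) (hTi N b) fun ω => max_le_max_right 0 (hF₂ _ hab),
    fun N => convexOn_integral convex_univ (fun ω => (hc _).sup (convexOn_const 0 convex_univ))
      fun s _ => hTi N s,
    fun s => ?_⟩
  calc ⨆ N, ENNReal.ofReal (∫ ω, T N s ω ∂μ)
      = ⨆ N : ℕ, ∫⁻ ω, ENNReal.ofReal (F (min (Z ω) N) s) ∂μ := iSup_congr fun N => by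
        rw [ofReal_integral_eq_lintegral_ofReal (hTi N s) (ae_of_all _ fun ω => le_max_right _ _)]
        simp [T]
    _ = ∫⁻ ω, ⨆ N : ℕ, ENNReal.ofReal (F (min (Z ω) N) s) ∂μ :=
        (lintegral_iSup (fun N => ENNReal.measurable_ofReal.comp
          ((hF₁ s).measurable.comp (hZ.min measurable_const)))
          fun N M hNM ω => ENNReal.ofReal_le_ofReal (hmonoN s _ hNM)).symm
    _ = ∫⁻ ω, ENNReal.ofReal (F (Z ω) s) ∂μ := lintegral_congr fun ω => by
        refine le_antisymm (iSup_le fun N => ENNReal.ofReal_le_ofReal (hF₁ s (min_le_left _ _)))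
          ?_
        obtain ⟨N, hN⟩ := exists_nat_ge (Z ω)
        exact le_iSup_of_le N (by rw [min_eq_left hN])

lemma LeIcxLintegral.comp₂ (hE : Measurable E) (hS : Measurable S) (hE' : Measurable E')
    (hS' : Measurable S') (hI : IndepFun E S μ) (hI' : IndepFun E' S' μ)
    (hg : MonotoneConvexSections g) (hEE : LeIcxLintegral μ E E')
    (hSS : LeIcxLintegral μ S S') :
    LeIcxLintegral μ (fun ω => g (E ω) (S ω)) (fun ω => g (E' ω) (S' ω)) := by
  intro ψ hψ hψc
  have hΦ : Measurable (Function.uncurry fun e s => ENNReal.ofReal (ψ (g e s))) :=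
    ENNReal.measurable_ofReal.comp (hψ.measurable.comp hg.measurable)
  obtain ⟨K, hK, hKm, hKc, hKsup⟩ := exists_monotone_convexOn_iSup_eq_lintegral (μ := μ)
    (F := fun e s => ψ (g e s)) hE'
    (fun s => hψ.comp (hg.monotone_left s)) (fun e => hψ.comp (hg.monotone_right e))
    (fun e => hψc.comp_of_monotone hψ (hg.convexOn_right e))
  calc ∫⁻ ω, ENNReal.ofReal (ψ (g (E ω) (S ω))) ∂μ
      = ∫⁻ ω', ∫⁻ ω, ENNReal.ofReal (ψ (g (E ω) (S ω'))) ∂μ ∂μ :=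
        hI.lintegral_comp_eq_lintegral_lintegral hE hS hΦ
    _ ≤ ∫⁻ ω', ∫⁻ ω, ENNReal.ofReal (ψ (g (E' ω) (S ω'))) ∂μ ∂μ :=
        lintegral_mono fun _ => hEE _ (hψ.comp (hg.monotone_left _))
          (hψc.comp_of_monotone hψ (hg.convexOn_left _))
    _ = ∫⁻ ω', ⨆ N, ENNReal.ofReal (K N (S ω')) ∂μ := by simp only [hKsup]
    _ ≤ ∫⁻ ω', ⨆ N, ENNReal.ofReal (K N (S' ω')) ∂μ :=
        lintegral_iSup_ofReal_comp_le (fun N => (hKm N).measurable) hK hS hS'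
          fun N => hSS _ (hKm N) (hKc N)
    _ = ∫⁻ ω', ∫⁻ ω, ENNReal.ofReal (ψ (g (E' ω) (S' ω'))) ∂μ ∂μ := by simp only [hKsup]
    _ = ∫⁻ ω, ENNReal.ofReal (ψ (g (E' ω) (S' ω))) ∂μ :=
        (hI'.lintegral_comp_eq_lintegral_lintegral hE' hS' hΦ).symm

lemma LeIcxOrMeanTop.comp₂ (hEm : Measurable E) (hSm : Measurable S) (hE'm : Measurable E')
    (hS'm : Measurable S') (hE : ∀ ω, 0 ≤ E ω) (hE' : ∀ ω, 0 ≤ E' ω) (hS : ∀ ω, 0 ≤ S ω)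
    (hS' : ∀ ω, 0 ≤ S' ω) (hI : IndepFun E S μ) (hI' : IndepFun E' S' μ)
    (hg : MonotoneConvexSections g) (hEE : LeIcxOrMeanTop μ E E')
    (hSS : LeIcxOrMeanTop μ S S') :
    LeIcxOrMeanTop μ (fun ω => g (E ω) (S ω)) (fun ω => g (E' ω) (S' ω)) := by
  rcases hEE with hEtop | hEE
  · exact comp₂_of_lintegral_eq_top hEm hSm hE hE' hS hS' hI hg hEtop hSS
  rcases hSS with hStop | hSS
  · exact comp₂_of_lintegral_eq_top (g := fun s e => g e s) hSm hEm hS hS' hE hE' hI.symm hg.swap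
      hStop (Or.inr hEE)
  · exact Or.inr (hEE.comp₂ hEm hSm hE'm hS'm hI hI' hg hSS)

end Steps

lemma ProbabilityTheory.iIndepFun.indepFun_of_recursion {Ω : Type*} [MeasurableSpace Ω]
    {μ : Measure Ω} {Y Z : ℕ → Ω → ℝ} (hY : ∀ i, Measurable (Y i)) (hind : iIndepFun Y μ)
    {G : ℝ → ℝ → ℝ} (hG : Measurable (Function.uncurry G))
    (hZ0 : Measurable[MeasurableSpace.comap (Y 0) inferInstance] (Z 0))
    (hZ : ∀ n ω, Z (n + 1) ω = G (Y (n + 1) ω) (Z n ω)) (n : ℕ) :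
    IndepFun (Y (n + 1)) (Z n) μ := by
  set m : ℕ → MeasurableSpace Ω := fun i => MeasurableSpace.comap (Y i) inferInstance
  have hm : ∀ {i j}, i ≤ j → m i ≤ ⨆ k ∈ Iic j, m k := fun {i j} hij =>
    le_iSup₂ (f := fun k (_ : k ∈ Iic j) => m k) i hij
  have hmeas : ∀ n, Measurable[⨆ k ∈ Iic n, m k] (Z n) := by
    intro n
    induction n with
    | zero => exact hZ0.mono (hm le_rfl) le_rfl
    | succ n ih =>
      rw [show Z (n + 1) = fun ω => G (Y (n + 1) ω) (Z n ω) from funext (hZ n)]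
      exact hG.comp (((comap_measurable (Y (n + 1))).mono (hm le_rfl) le_rfl).prodMk
        (ih.mono (iSup₂_mono' fun k hk => ⟨k, (mem_Iic.1 hk).trans n.le_succ, le_rfl⟩) le_rfl))
  have h := indep_iSup_of_disjoint (fun i => (hY i).comap_le)
    ((iIndepFun_iff_iIndep _ _ _).1 hind) (S := {n + 1}) (T := Iic n) (by simp)
  rw [IndepFun_iff_Indep]
  exact indep_of_indep_of_le_right (indep_of_indep_of_le_left h
    (le_iSup₂ (f := fun k (_ : k ∈ ({n + 1} : Set ℕ)) => m k) (n + 1) rfl))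
    (measurable_iff_comap_le.1 (hmeas n))

/-- One process of model M2; `Nat.rec (σ 0) (fun n _ => ε n)` is the sequence
`σ 0, ε 0, ε 1, …`. -/
structure IsModelM2 {Ω : Type*} [MeasurableSpace Ω] (μ : Measure Ω) (f : ℝ → ℝ → ℝ)
    (σ ε : ℕ → Ω → ℝ) : Prop where
  measurable_vol : ∀ n, Measurable (σ n)
  measurable_innov : ∀ n, Measurable (ε n)
  vol_sq_succ : ∀ n ω, σ (n + 1) ω ^ 2 = f (ε n ω ^ 2) (σ n ω ^ 2)
  indep : iIndepFun (m := fun _ : ℕ => Real.measurableSpace)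
    (fun i => Nat.rec (σ 0) (fun n _ => ε n) i) μ

namespace IsModelM2

variable {Ω : Type*} [MeasurableSpace Ω] {μ : Measure Ω} {f : ℝ → ℝ → ℝ}
  {σ ε σ' ε' : ℕ → Ω → ℝ}

lemma measurable_vol_sq (hM : IsModelM2 μ f σ ε) (n : ℕ) : Measurable fun ω => σ n ω ^ 2 :=
  (hM.measurable_vol n).pow_const 2

lemma measurable_innov_sq (hM : IsModelM2 μ f σ ε) (n : ℕ) : Measurable fun ω => ε n ω ^ 2 :=
  (hM.measurable_innov n).pow_const 2

lemma vol_sq_succ_eq (hM : IsModelM2 μ f σ ε) (n : ℕ) :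
    (fun ω => σ (n + 1) ω ^ 2) = fun ω => quadrantExt f (ε n ω ^ 2) (σ n ω ^ 2) :=
  funext fun ω => by rw [hM.vol_sq_succ, quadrantExt_of_nonneg f (sq_nonneg _) (sq_nonneg _)]

lemma indepFun_sq (hM : IsModelM2 μ f σ ε) (hf : Measurable (Function.uncurry (quadrantExt f)))
    (n : ℕ) : IndepFun (fun ω => ε n ω ^ 2) (fun ω => σ n ω ^ 2) μ :=
  (hM.indep.indepFun_of_recursion (Z := fun n ω => σ n ω ^ 2)
    (G := fun e z => quadrantExt f (e ^ 2) z)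
    (fun i => by cases i; exacts [hM.measurable_vol 0, hM.measurable_innov _])
    (hf.comp ((measurable_fst.pow_const 2).prodMk measurable_snd))
    ((comap_measurable _).pow_const 2) (fun n ω => congrFun (hM.vol_sq_succ_eq n) ω) n).comp
    (measurable_id.pow_const 2) measurable_id

variable [IsProbabilityMeasure μ]

lemma leStLintegral_comp₂ (hM : IsModelM2 μ f σ ε) (hM' : IsModelM2 μ f σ' ε')
    (hf : Measurable (Function.uncurry (quadrantExt f))) {g : ℝ → ℝ → ℝ}
    (hg : Measurable (Function.uncurry g)) (hg₁ : ∀ s, Monotone (g · s))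
    (hg₂ : ∀ e, Monotone (g e)) {n : ℕ}
    (hε : LeSt μ (fun ω => ε n ω ^ 2) (fun ω => ε' n ω ^ 2))
    (hσ : LeStLintegral μ (fun ω => σ n ω ^ 2) (fun ω => σ' n ω ^ 2)) :
    LeStLintegral μ (fun ω => g (ε n ω ^ 2) (σ n ω ^ 2)) (fun ω => g (ε' n ω ^ 2) (σ' n ω ^ 2)) :=
  (hε.leStLintegral (hM.measurable_innov_sq n) (hM'.measurable_innov_sq n)).comp₂
    (hM.measurable_innov_sq n) (hM.measurable_vol_sq n) (hM'.measurable_innov_sq n)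
    (hM'.measurable_vol_sq n) (hM.indepFun_sq hf n) (hM'.indepFun_sq hf n) hg hg₁ hg₂ hσ

lemma leIcxOrMeanTop_comp₂ (hM : IsModelM2 μ f σ ε) (hM' : IsModelM2 μ f σ' ε')
    (hf : Measurable (Function.uncurry (quadrantExt f)))
    {g : ℝ → ℝ → ℝ} (hg : MonotoneConvexSections g) {n : ℕ}
    (hε : LeIcx μ (fun ω => ε n ω ^ 2) (fun ω => ε' n ω ^ 2))
    (hσ : LeIcxOrMeanTop μ (fun ω => σ n ω ^ 2) (fun ω => σ' n ω ^ 2)) :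
    LeIcxOrMeanTop μ (fun ω => g (ε n ω ^ 2) (σ n ω ^ 2))
      (fun ω => g (ε' n ω ^ 2) (σ' n ω ^ 2)) :=
  (hε.leIcxOrMeanTop (hM.measurable_innov_sq n) (hM'.measurable_innov_sq n)
    (fun _ => sq_nonneg _) (fun _ => sq_nonneg _)).comp₂
    (hM.measurable_innov_sq n) (hM.measurable_vol_sq n) (hM'.measurable_innov_sq n)
    (hM'.measurable_vol_sq n) (fun _ => sq_nonneg _) (fun _ => sq_nonneg _)
    (fun _ => sq_nonneg _) (fun _ => sq_nonneg _) (hM.indepFun_sq hf n) (hM'.indepFun_sq hf n)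
    hg hσ

lemma leStLintegral_vol_sq (hM : IsModelM2 μ f σ ε) (hM' : IsModelM2 μ f σ' ε')
    (hf : Measurable (Function.uncurry (quadrantExt f)))
    (hf₁ : ∀ s, Monotone (quadrantExt f · s)) (hf₂ : ∀ e, Monotone (quadrantExt f e))
    (hε : ∀ k, LeSt μ (fun ω => ε k ω ^ 2) (fun ω => ε' k ω ^ 2))
    (hσ : LeSt μ (fun ω => σ 0 ω ^ 2) (fun ω => σ' 0 ω ^ 2)) (n : ℕ) :
    LeStLintegral μ (fun ω => σ n ω ^ 2) (fun ω => σ' n ω ^ 2) := by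
  induction n with
  | zero => exact hσ.leStLintegral (hM.measurable_vol_sq 0) (hM'.measurable_vol_sq 0)
  | succ n ih =>
    rw [hM.vol_sq_succ_eq, hM'.vol_sq_succ_eq]
    exact hM.leStLintegral_comp₂ hM' hf hf hf₁ hf₂ (hε n) ih

lemma leIcxOrMeanTop_vol_sq (hM : IsModelM2 μ f σ ε) (hM' : IsModelM2 μ f σ' ε')
    (hf : MonotoneConvexSections (quadrantExt f))
    (hε : ∀ k, LeIcx μ (fun ω => ε k ω ^ 2) (fun ω => ε' k ω ^ 2))
    (hσ : LeIcx μ (fun ω => σ 0 ω ^ 2) (fun ω => σ' 0 ω ^ 2)) (n : ℕ) :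
    LeIcxOrMeanTop μ (fun ω => σ n ω ^ 2) (fun ω => σ' n ω ^ 2) := by
  induction n with
  | zero =>
    exact hσ.leIcxOrMeanTop (hM.measurable_vol_sq 0) (hM'.measurable_vol_sq 0)
      (fun _ => sq_nonneg _) (fun _ => sq_nonneg _)
  | succ n ih =>
    rw [hM.vol_sq_succ_eq, hM'.vol_sq_succ_eq]
    exact hM.leIcxOrMeanTop_comp₂ hM' hf.measurable hf (hε n) ih

end IsModelM2

theorem stmt3_general {Ω : Type*} [MeasurableSpace Ω] (μ : Measure Ω) [IsProbabilityMeasure μ]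
    (f : ℝ → ℝ → ℝ)
    (hf_mono : MonotoneOn (fun p : ℝ × ℝ => f p.1 p.2) (Ici 0 ×ˢ Ici 0))
    (hf_cx1 : ∀ y ∈ Ici (0:ℝ), ConvexOn ℝ (Ici (0:ℝ)) (fun x => f x y))
    (hf_cx2 : ∀ x ∈ Ici (0:ℝ), ConvexOn ℝ (Ici (0:ℝ)) (fun y => f x y))
    (σ σ' : ℕ → Ω → ℝ) (ε ε' : ℕ → Ω → ℝ) (X X' : ℕ → Ω → ℝ)
    (hσmeas : ∀ n, Measurable (σ n)) (hσ'meas : ∀ n, Measurable (σ' n))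
    (hεmeas : ∀ n, Measurable (ε n)) (hε'meas : ∀ n, Measurable (ε' n))
    (hX : ∀ n ω, X n ω = σ n ω * ε n ω) (hX' : ∀ n ω, X' n ω = σ' n ω * ε' n ω)
    (hrec : ∀ n ω, (σ (n + 1) ω) ^ 2 = f ((ε n ω) ^ 2) ((σ n ω) ^ 2))
    (hrec' : ∀ n ω, (σ' (n + 1) ω) ^ 2 = f ((ε' n ω) ^ 2) ((σ' n ω) ^ 2))
    -- independence of (σ₀, ε₀, ε₁, …) and of (σ̃₀, ε̃₀, ε̃₁, …):
    (hindep : iIndepFun (m := fun _ : ℕ => Real.measurableSpace)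
      (fun i => Nat.rec (σ 0) (fun n _ => ε n) i) μ)
    (hindep' : iIndepFun (m := fun _ : ℕ => Real.measurableSpace)
      (fun i => Nat.rec (σ' 0) (fun n _ => ε' n) i) μ)
    (n : ℕ) :
    ((∀ k, LeSt μ (fun ω => (ε k ω) ^ 2) (fun ω => (ε' k ω) ^ 2)) →
        LeSt μ (fun ω => (σ 0 ω) ^ 2) (fun ω => (σ' 0 ω) ^ 2) →
        LeSt μ (fun ω => (X n ω) ^ 2) (fun ω => (X' n ω) ^ 2)) ∧
      ((∀ k, LeIcx μ (fun ω => (ε k ω) ^ 2) (fun ω => (ε' k ω) ^ 2)) →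
        LeIcx μ (fun ω => (σ 0 ω) ^ 2) (fun ω => (σ' 0 ω) ^ 2) →
        LeIcx μ (fun ω => (X n ω) ^ 2) (fun ω => (X' n ω) ^ 2)) := by
  have hM : IsModelM2 μ f σ ε := ⟨hσmeas, hεmeas, hrec, hindep⟩
  have hM' : IsModelM2 μ f σ' ε' := ⟨hσ'meas, hε'meas, hrec', hindep'⟩
  have hf := MonotoneConvexSections.quadrantExt hf_mono hf_cx1 hf_cx2
  have hmul := MonotoneConvexSections.quadrantExt_mul
  have hX_sq : ∀ {σ ε X : ℕ → Ω → ℝ}, (∀ n ω, X n ω = σ n ω * ε n ω) →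
      (fun ω => X n ω ^ 2) = fun ω => quadrantExt (· * ·) (ε n ω ^ 2) (σ n ω ^ 2) :=
    fun hX => funext fun ω => by
      rw [hX, quadrantExt_of_nonneg _ (sq_nonneg _) (sq_nonneg _)]
      ring
  refine ⟨fun hε hσ => ?_, fun hε hσ => ?_⟩
  · refine LeStLintegral.leSt (fun _ => by positivity) (fun _ => by positivity) ?_
    rw [hX_sq hX, hX_sq hX']
    exact hM.leStLintegral_comp₂ hM' hf.measurable hmul.measurable hmul.monotone_left
      hmul.monotone_right (hε n) (hM.leStLintegral_vol_sq hM' hf.measurable hf.monotone_left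
        hf.monotone_right hε hσ n)
  · refine LeIcxOrMeanTop.leIcx (fun _ => by positivity) (fun _ => by positivity) ?_
    rw [hX_sq hX, hX_sq hX']
    exact hM.leIcxOrMeanTop_comp₂ hM' hf.measurable hmul (hε n)
      (hM.leIcxOrMeanTop_vol_sq hM' hf hε hσ n)

/-- in model M2, `X_n = σ_n ε_n`, `σ_{n+1}² = f(ε_n², σ_n²)` with `f` increasing
and componentwise convex and independent innovations:  if `ε_k² ≤_st ε̃_k²` for all `k`
(and `σ₀² ≤_st σ̃₀²`) then `X_n² ≤_st X̃_n²`, and if `ε_k² ≤_icx ε̃_k²` for all `k`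
(and `σ₀² ≤_icx σ̃₀²`) then `X_n² ≤_icx X̃_n²`. -/
theorem stmt3 {Ω : Type*} [MeasurableSpace Ω] (μ : Measure Ω) [IsProbabilityMeasure μ]
    (f : ℝ → ℝ → ℝ)
    (hf_mono : MonotoneOn (fun p : ℝ × ℝ => f p.1 p.2) (Ici 0 ×ˢ Ici 0))
    (hf_cx1 : ∀ y ∈ Ici (0:ℝ), ConvexOn ℝ (Ici (0:ℝ)) (fun x => f x y))
    (hf_cx2 : ∀ x ∈ Ici (0:ℝ), ConvexOn ℝ (Ici (0:ℝ)) (fun y => f x y))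
    (σ σ' : ℕ → Ω → ℝ) (ε ε' : ℕ → Ω → ℝ) (X X' : ℕ → Ω → ℝ)
    (hσmeas : ∀ n, Measurable (σ n)) (hσ'meas : ∀ n, Measurable (σ' n))
    (hεmeas : ∀ n, Measurable (ε n)) (hε'meas : ∀ n, Measurable (ε' n))
    (hσnn : ∀ n ω, 0 ≤ σ n ω) (hσ'nn : ∀ n ω, 0 ≤ σ' n ω)
    (hX : ∀ n ω, X n ω = σ n ω * ε n ω) (hX' : ∀ n ω, X' n ω = σ' n ω * ε' n ω)
    (hEε : ∀ n, ∫ ω, ε n ω ∂μ = 0) (hEε' : ∀ n, ∫ ω, ε' n ω ∂μ = 0)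
    (hrec : ∀ n ω, (σ (n + 1) ω) ^ 2 = f ((ε n ω) ^ 2) ((σ n ω) ^ 2))
    (hrec' : ∀ n ω, (σ' (n + 1) ω) ^ 2 = f ((ε' n ω) ^ 2) ((σ' n ω) ^ 2))
    -- independence of (σ₀, ε₀, ε₁, …) and of (σ̃₀, ε̃₀, ε̃₁, …):
    (hindep : iIndepFun (m := fun _ : ℕ => Real.measurableSpace)
      (fun i => Nat.rec (σ 0) (fun n _ => ε n) i) μ)
    (hindep' : iIndepFun (m := fun _ : ℕ => Real.measurableSpace)
      (fun i => Nat.rec (σ' 0) (fun n _ => ε' n) i) μ)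
    (n : ℕ) :
    ((∀ k, LeSt μ (fun ω => (ε k ω) ^ 2) (fun ω => (ε' k ω) ^ 2)) →
        LeSt μ (fun ω => (σ 0 ω) ^ 2) (fun ω => (σ' 0 ω) ^ 2) →
        LeSt μ (fun ω => (X n ω) ^ 2) (fun ω => (X' n ω) ^ 2)) ∧
      ((∀ k, LeIcx μ (fun ω => (ε k ω) ^ 2) (fun ω => (ε' k ω) ^ 2)) →
        LeIcx μ (fun ω => (σ 0 ω) ^ 2) (fun ω => (σ' 0 ω) ^ 2) →
        LeIcx μ (fun ω => (X n ω) ^ 2) (fun ω => (X' n ω) ^ 2)) :=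
  stmt3_general μ f hf_mono hf_cx1 hf_cx2 σ σ' ε ε' X X' hσmeas hσ'meas hεmeas hε'meas hX hX' hrec
    hrec' hindep hindep' n
end

section
/- Let σ and σ̃ be nonnegative random variables with σ ≤_st σ̃, and let ε be a random variable independent of both σ and σ̃ with E[ε] = 0. Then σε ≤_cx σ̃ε (convex order). -/
/-!
For convex `φ` and mean-zero `ε`, the function `g s = E φ(s ε)` is nondecreasing on `s ≥ 0`:
convexity gives `g a ≤ (a / b) g b + (1 - a / b) φ 0` for `0 ≤ a ≤ b`, and Jensen gives
`φ 0 = φ (E[b ε]) ≤ g b`. By independence and Fubini `E φ(σ ε) = E g(σ)`, so the stochastic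
order yields `E g(σ) ≤ E g(σ̃)`. As `g` may be finite only on an initial segment of `[0, ∞)`
and unbounded there, the order is applied to the monotone truncations `min g n`, and `n → ∞`.
-/

open MeasureTheory ProbabilityTheory

/-- Convex order. -/
def LeCx {Ω : Type*} [MeasurableSpace Ω] (μ : Measure Ω) (X Y : Ω → ℝ) : Prop :=
  ∀ φ : ℝ → ℝ, ConvexOn ℝ Set.univ φ → Integrable (φ ∘ X) μ → Integrable (φ ∘ Y) μ →
    ∫ ω, φ (X ω) ∂μ ≤ ∫ ω, φ (Y ω) ∂μ

open Set Filter Topology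

namespace ConvexOn

variable {φ : ℝ → ℝ}

lemma add_rightDeriv_mul_sub_le_s4 (hφ : ConvexOn ℝ univ φ) (x₀ x : ℝ) :
    φ x₀ + derivWithin φ (Ioi x₀) x₀ * (x - x₀) ≤ φ x := by
  have hx₀ : x₀ ∈ interior univ := by simp
  rcases lt_trichotomy x x₀ with h | rfl | h
  · have hslope := hφ.slope_le_leftDeriv_of_mem_interior (mem_univ x) hx₀ h
    have hderiv := hφ.leftDeriv_le_rightDeriv_of_mem_interior hx₀
    rw [slope_def_field, div_le_iff₀ (sub_pos.2 h)] at hslope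
    nlinarith
  · simp
  · have hslope := hφ.rightDeriv_le_slope_of_mem_interior hx₀ (mem_univ x) h
    rw [slope_def_field, le_div_iff₀ (sub_pos.2 h)] at hslope
    linarith

-- At `b = 0` the junk value `a / b = 0` is harmless, since then `a = 0`.
lemma map_mul_le_of_le (hφ : ConvexOn ℝ univ φ) {a b : ℝ} (ha : 0 ≤ a) (hab : a ≤ b) (x : ℝ) :
    φ (a * x) ≤ a / b * φ (b * x) + (1 - a / b) * φ 0 := by
  obtain rfl | hb := (ha.trans hab).eq_or_lt
  · obtain rfl := le_antisymm hab ha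
    simp
  have := hφ.2 (mem_univ (b * x)) (mem_univ 0) (div_nonneg ha hb.le)
    (sub_nonneg.2 (div_le_one_of_le₀ hab hb.le)) (by ring)
  have hax : a / b * (b * x) = a * x := by field_simp
  simpa only [smul_eq_mul, mul_zero, add_zero, hax] using this

variable {ν : Measure ℝ}

lemma continuous_of_univ (hφ : ConvexOn ℝ univ φ) : Continuous φ :=
  continuousOn_univ.1 (hφ.continuousOn isOpen_univ)

lemma integrable_comp_mul_of_le [IsFiniteMeasure ν] (hφ : ConvexOn ℝ univ φ)
    (hid : Integrable id ν) {a b : ℝ} (ha : 0 ≤ a) (hab : a ≤ b)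
    (hb : Integrable (fun e => φ (b * e)) ν) : Integrable (fun e => φ (a * e)) ν := by
  set c := derivWithin φ (Ioi 0) 0
  have ht₀ : 0 ≤ a / b := div_nonneg ha (ha.trans hab)
  have ht₁ : a / b ≤ 1 := div_le_one_of_le₀ hab (ha.trans hab)
  refine Integrable.mono' ((hb.abs.add (integrable_const |φ 0|)).add (hid.abs.const_mul |c * a|))
    (hφ.continuous_of_univ.comp (continuous_const_mul a)).aestronglyMeasurable
    (Eventually.of_forall fun e => ?_)
  have hupper := hφ.map_mul_le_of_le ha hab e
  have hlower : φ 0 + c * (a * e - 0) ≤ φ (a * e) := hφ.add_rightDeriv_mul_sub_le_s4 0 (a * e)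
  have h₁ : a / b * φ (b * e) ≤ |φ (b * e)| := by
    refine (le_abs_self _).trans ?_
    rw [abs_mul, abs_of_nonneg ht₀]
    exact mul_le_of_le_one_left (abs_nonneg _) ht₁
  have h₂ : (1 - a / b) * φ 0 ≤ |φ 0| := by
    refine (le_abs_self _).trans ?_
    rw [abs_mul, abs_of_nonneg (sub_nonneg.2 ht₁)]
    exact mul_le_of_le_one_left (abs_nonneg _) (by linarith)
  have h₃ : -(|c * a| * |e|) ≤ c * (a * e - 0) := by
    rw [← abs_mul, sub_zero, ← mul_assoc]
    exact neg_abs_le _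
  simp only [Pi.add_apply, id, Real.norm_eq_abs, abs_le]
  constructor <;> linarith [abs_nonneg (φ (b * e)), neg_abs_le (φ 0),
    mul_nonneg (abs_nonneg (c * a)) (abs_nonneg e)]

lemma integral_comp_mul_mono [IsProbabilityMeasure ν] (hφ : ConvexOn ℝ univ φ)
    (hid : Integrable id ν) (hmean : ∫ e, e ∂ν = 0) {a b : ℝ} (ha : 0 ≤ a) (hab : a ≤ b)
    (hai : Integrable (fun e => φ (a * e)) ν) (hbi : Integrable (fun e => φ (b * e)) ν) :
    ∫ e, φ (a * e) ∂ν ≤ ∫ e, φ (b * e) ∂ν := by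
  have ht₀ : 0 ≤ a / b := div_nonneg ha (ha.trans hab)
  have ht₁ : a / b ≤ 1 := div_le_one_of_le₀ hab (ha.trans hab)
  have hjensen : φ 0 ≤ ∫ e, φ (b * e) ∂ν := by
    have := hφ.map_integral_le hφ.continuous_of_univ.continuousOn isClosed_univ
      (ae_of_all _ fun _ => mem_univ _) (hid.const_mul b) hbi
    rwa [integral_const_mul, show ∫ e, id e ∂ν = 0 from hmean, mul_zero] at this
  calc ∫ e, φ (a * e) ∂ν
      ≤ ∫ e, (a / b * φ (b * e) + (1 - a / b) * φ 0) ∂ν :=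
        integral_mono hai ((hbi.const_mul _).add (integrable_const _)) (hφ.map_mul_le_of_le ha hab)
    _ = a / b * ∫ e, φ (b * e) ∂ν + (1 - a / b) * φ 0 := by
        rw [integral_add (hbi.const_mul _) (integrable_const _), integral_const_mul,
          integral_const, probReal_univ, one_smul]
    _ ≤ ∫ e, φ (b * e) ∂ν := by nlinarith

end ConvexOn

namespace ProbabilityTheory.IndepFun

variable {Ω β γ : Type*} [MeasurableSpace Ω] [MeasurableSpace β] [MeasurableSpace γ]
  {μ : Measure Ω} [IsFiniteMeasure μ] {X : Ω → β} {Y : Ω → γ} {f : β → γ → ℝ}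

lemma integrable_uncurry_map_prod_map (hXY : IndepFun X Y μ) (hX : AEMeasurable X μ)
    (hY : AEMeasurable Y μ) (hf : StronglyMeasurable (Function.uncurry f))
    (hint : Integrable (fun ω => f (X ω) (Y ω)) μ) :
    Integrable (Function.uncurry f) ((μ.map X).prod (μ.map Y)) := by
  rw [← (indepFun_iff_map_prod_eq_prod_map_map hX hY).1 hXY]
  exact (integrable_map_measure hf.aestronglyMeasurable (hX.prodMk hY)).2 hint

lemma integral_comp_eq_integral_integral (hXY : IndepFun X Y μ) (hX : AEMeasurable X μ)
    (hY : AEMeasurable Y μ) (hf : StronglyMeasurable (Function.uncurry f))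
    (hint : Integrable (fun ω => f (X ω) (Y ω)) μ) :
    ∫ ω, f (X ω) (Y ω) ∂μ = ∫ ω, ∫ y, f (X ω) y ∂(μ.map Y) ∂μ := by
  calc ∫ ω, f (X ω) (Y ω) ∂μ
      = ∫ p, Function.uncurry f p ∂(μ.map fun ω => (X ω, Y ω)) :=
        (integral_map (hX.prodMk hY) hf.aestronglyMeasurable).symm
    _ = ∫ p, Function.uncurry f p ∂((μ.map X).prod (μ.map Y)) := by
        rw [(indepFun_iff_map_prod_eq_prod_map_map hX hY).1 hXY]
    _ = ∫ x, ∫ y, f x y ∂(μ.map Y) ∂(μ.map X) :=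
        integral_prod _ (hXY.integrable_uncurry_map_prod_map hX hY hf hint)
    _ = ∫ ω, ∫ y, f (X ω) y ∂(μ.map Y) ∂μ :=
        integral_map hX hf.integral_prod_right'.aestronglyMeasurable

lemma integrable_integral_comp (hXY : IndepFun X Y μ) (hX : AEMeasurable X μ)
    (hY : AEMeasurable Y μ) (hf : StronglyMeasurable (Function.uncurry f))
    (hint : Integrable (fun ω => f (X ω) (Y ω)) μ) :
    Integrable (fun ω => ∫ y, f (X ω) y ∂(μ.map Y)) μ :=
  (integrable_map_measure hf.integral_prod_right'.aestronglyMeasurable hX).1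
    (hXY.integrable_uncurry_map_prod_map hX hY hf hint).integral_prod_left

lemma ae_integrable_comp (hXY : IndepFun X Y μ) (hX : AEMeasurable X μ)
    (hY : AEMeasurable Y μ) (hf : StronglyMeasurable (Function.uncurry f))
    (hint : Integrable (fun ω => f (X ω) (Y ω)) μ) :
    ∀ᵐ ω ∂μ, Integrable (f (X ω)) (μ.map Y) :=
  ae_of_ae_map hX (hXY.integrable_uncurry_map_prod_map hX hY hf hint).prod_right_ae

end ProbabilityTheory.IndepFun

lemma MonotoneOn.monotone_piecewise_min {g : ℝ → ℝ} {B : Set ℝ} [DecidablePred (· ∈ B)]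
    (hg : MonotoneOn g B) (hB : IsLowerSet B) (c : ℝ) :
    Monotone (B.piecewise (fun s => min (g s) c) fun _ => c) := by
  intro s t hst
  by_cases ht : t ∈ B
  · have hs := hB hst ht
    simp only [piecewise_eq_of_mem _ _ _ hs, piecewise_eq_of_mem _ _ _ ht]
    exact min_le_min_right c (hg hs ht hst)
  · by_cases hs : s ∈ B <;> simp [piecewise, hs, ht]

section StochasticOrder

variable {Ω : Type*} [MeasurableSpace Ω] {μ : Measure Ω}

lemma tendsto_integral_min_natCast {f : Ω → ℝ} (hf : Integrable f μ) :
    Tendsto (fun n : ℕ => ∫ ω, min (f ω) n ∂μ) atTop (𝓝 (∫ ω, f ω ∂μ)) := by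
  refine tendsto_integral_of_dominated_convergence (fun ω => |f ω|)
    (fun n => (hf.1.aemeasurable.min aemeasurable_const).aestronglyMeasurable) hf.abs
    (fun n => Eventually.of_forall fun ω => ?_) (Eventually.of_forall fun ω => ?_)
  · rw [Real.norm_eq_abs, abs_le]
    exact ⟨le_min (neg_abs_le _) ((neg_nonpos.2 (abs_nonneg _)).trans n.cast_nonneg),
      (min_le_left _ _).trans (le_abs_self _)⟩
  · exact tendsto_atTop_of_eventually_const (i₀ := ⌈f ω⌉₊) fun n hn =>
      min_eq_left ((Nat.le_ceil _).trans (Nat.cast_le.2 hn))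

lemma LeSt.integral_le_of_monotoneOn [IsFiniteMeasure μ] {X Y : Ω → ℝ} (hXY : LeSt μ X Y)
    {B : Set ℝ} (hB : IsLowerSet B) {g : ℝ → ℝ} (hg : MonotoneOn g B) (hXB : ∀ᵐ ω ∂μ, X ω ∈ B)
    (hYB : ∀ᵐ ω ∂μ, Y ω ∈ B) (hgX : Integrable (g ∘ X) μ) (hgY : Integrable (g ∘ Y) μ) :
    ∫ ω, g (X ω) ∂μ ≤ ∫ ω, g (Y ω) ∂μ := by
  classical
  refine le_of_tendsto_of_tendsto' (tendsto_integral_min_natCast hgX)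
    (tendsto_integral_min_natCast hgY) fun n => ?_
  set gₙ := B.piecewise (fun s => min (g s) n) fun _ => n
  have hX : (fun ω => min (g (X ω)) n) =ᵐ[μ] gₙ ∘ X :=
    hXB.mono fun ω h => by simp [gₙ, h]
  have hY : (fun ω => min (g (Y ω)) n) =ᵐ[μ] gₙ ∘ Y :=
    hYB.mono fun ω h => by simp [gₙ, h]
  calc ∫ ω, min (g (X ω)) n ∂μ
      = ∫ ω, gₙ (X ω) ∂μ := integral_congr_ae hX
    _ ≤ ∫ ω, gₙ (Y ω) ∂μ := hXY gₙ (hg.monotone_piecewise_min hB n)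
        ((hgX.inf (integrable_const _)).congr hX) ((hgY.inf (integrable_const _)).congr hY)
    _ = ∫ ω, min (g (Y ω)) n ∂μ := (integral_congr_ae hY).symm

end StochasticOrder

/-- if `σ, σ̃` are nonnegative with `σ ≤_st σ̃`, and `ε` is independent of both,
with `E[ε] = 0`, then `σε ≤_cx σ̃ε`. -/
theorem stmt4 {Ω : Type*} [MeasurableSpace Ω] (μ : Measure Ω) [IsProbabilityMeasure μ]
    (σ σ' ε : Ω → ℝ)
    (hσmeas : Measurable σ) (hσ'meas : Measurable σ') (hεmeas : Measurable ε)
    (hσnn : ∀ ω, 0 ≤ σ ω) (hσ'nn : ∀ ω, 0 ≤ σ' ω)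
    (hst : LeSt μ σ σ')
    (hindep : IndepFun σ ε μ) (hindep' : IndepFun σ' ε μ)
    (hεint : Integrable ε μ) (hεmean : ∫ ω, ε ω ∂μ = 0) :
    LeCx μ (fun ω => σ ω * ε ω) (fun ω => σ' ω * ε ω) := by
  intro φ hφ hint hint'
  set ν := μ.map ε
  have : IsProbabilityMeasure ν := Measure.isProbabilityMeasure_map hεmeas.aemeasurable
  have hid : Integrable id ν :=
    (integrable_map_measure aestronglyMeasurable_id hεmeas.aemeasurable).2 hεint
  have hmean : ∫ e, e ∂ν = 0 :=
    (integral_map hεmeas.aemeasurable aestronglyMeasurable_id).trans hεmean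
  have hf : StronglyMeasurable (Function.uncurry fun s e => φ (s * e)) :=
    (hφ.continuous_of_univ.comp continuous_mul).stronglyMeasurable
  -- clamping at `0` makes `B` a lower set; it changes nothing on the ranges of `σ` and `σ'`
  set B := {s : ℝ | Integrable (fun e => φ (max s 0 * e)) ν}
  set g := fun s : ℝ => ∫ e, φ (max s 0 * e) ∂ν
  have hB : IsLowerSet B := fun _ _ hle ht =>
    hφ.integrable_comp_mul_of_le hid (le_max_right _ _) (max_le_max_right 0 hle) ht
  have hg : MonotoneOn g B := fun _ hs _ ht hle =>
    hφ.integral_comp_mul_mono hid hmean (le_max_right _ _) (max_le_max_right 0 hle) hs ht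
  have fubini (X : Ω → ℝ) (hX : Measurable X) (hXnn : ∀ ω, 0 ≤ X ω) (hXε : IndepFun X ε μ)
      (hint : Integrable (fun ω => φ (X ω * ε ω)) μ) :
      (∀ᵐ ω ∂μ, X ω ∈ B) ∧ Integrable (g ∘ X) μ ∧
        ∫ ω, φ (X ω * ε ω) ∂μ = ∫ ω, g (X ω) ∂μ := by
    simp only [B, g, Function.comp_def, mem_ofPred_eq, max_eq_left (hXnn _)]
    exact ⟨hXε.ae_integrable_comp hX.aemeasurable hεmeas.aemeasurable hf hint,
      hXε.integrable_integral_comp hX.aemeasurable hεmeas.aemeasurable hf hint,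
      hXε.integral_comp_eq_integral_integral hX.aemeasurable hεmeas.aemeasurable hf hint⟩
  obtain ⟨hσB, hgσ, hσ⟩ := fubini σ hσmeas hσnn hindep hint
  obtain ⟨hσ'B, hgσ', hσ'⟩ := fubini σ' hσ'meas hσ'nn hindep' hint'
  change ∫ ω, φ (σ ω * ε ω) ∂μ ≤ ∫ ω, φ (σ' ω * ε ω) ∂μ
  rw [hσ, hσ']
  exact hst.integral_le_of_monotoneOn hB hg hσB hσ'B hgσ hgσ'
end

section
/- Let X and Y be symmetric random variables with continuous densities f, g, E[X²] = E[Y²] = 1, such that f − g changes sign exactly 4 times, with f lower in the tails and in the center and higher in the intermediate regions (sign sequence of g − f: +,−,+,−,+ reading from −∞). Then X² ≤_cx Y² (equivalently X² ≤_icx Y²). Consequently, if fourth moments are finite, the kurtosis satisfies E[X⁴] ≤ E[Y⁴]. -/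
/-!
Let `φ` be convex and let `ℓ` be its secant line through `a²` and `b²`. Then `φ - ℓ` is
nonnegative outside `[a², b²]` and nonpositive inside, which is exactly the sign pattern of
`g - f` read in the variable `x²`; hence `∫ (φ(x²) - ℓ(x²)) (g - f) ≥ 0`. As `ℓ` is affine and
`X`, `Y` have equal mass and equal second moments, `∫ ℓ(x²) (g - f) = 0`, so
`E φ(X²) ≤ E φ(Y²)`. The kurtosis comparison is the case `φ t = t²`.
-/

open MeasureTheory Set

lemma ConvexOn.le_secant {s : Set ℝ} {φ : ℝ → ℝ} (hφ : ConvexOn ℝ s φ) {p q t : ℝ}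
    (hp : p ∈ s) (hq : q ∈ s) (hpt : p ≤ t) (htq : t ≤ q) :
    φ t ≤ φ p + slope φ p q * (t - p) := by
  rcases hpt.eq_or_lt with rfl | hpt
  · simp
  have hts : t ∈ s := hφ.1.ordConnected.out hp hq ⟨hpt.le, htq⟩
  have hmono : slope φ p t ≤ slope φ p q :=
    hφ.slope_mono hp ⟨hts, hpt.ne'⟩ ⟨hq, (hpt.trans_le htq).ne'⟩ htq
  have hφt : (t - p) * slope φ p t = φ t - φ p := sub_smul_slope φ p t
  nlinarith [mul_le_mul_of_nonneg_left hmono (sub_nonneg.2 hpt.le)]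

lemma ConvexOn.secant_le {s : Set ℝ} {φ : ℝ → ℝ} (hφ : ConvexOn ℝ s φ) {p q t : ℝ}
    (hp : p ∈ s) (hq : q ∈ s) (ht : t ∈ s) (hpq : p < q) (hout : t ∉ Ioo p q) :
    φ p + slope φ p q * (t - p) ≤ φ t := by
  have hφt : (t - p) * slope φ p t = φ t - φ p := sub_smul_slope φ p t
  rcases lt_trichotomy t p with htp | rfl | hpt
  · have hmono : slope φ p t ≤ slope φ p q :=
      hφ.slope_mono hp ⟨ht, htp.ne⟩ ⟨hq, hpq.ne'⟩ (htp.trans hpq).le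
    nlinarith [mul_le_mul_of_nonpos_left hmono (sub_nonpos.2 htp.le)]
  · simp
  · have hqt : q ≤ t := not_lt.1 fun htq => hout ⟨hpt, htq⟩
    have hmono : slope φ p q ≤ slope φ p t :=
      hφ.slope_mono hp ⟨hq, hpq.ne'⟩ ⟨ht, hpt.ne'⟩ hqt
    nlinarith [mul_le_mul_of_nonneg_left hmono (sub_nonneg.2 hpt.le)]

lemma ConvexOn.integral_comp_mul_nonneg_of_sign_changes {α : Type*} [MeasurableSpace α]
    {ν : Measure α} {s h : α → ℝ} {φ : ℝ → ℝ} (hφ : ConvexOn ℝ univ φ) {p q : ℝ} (hpq : p < q)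
    (hh : Integrable h ν) (hsh : Integrable (fun x => s x * h x) ν)
    (hφh : Integrable (fun x => φ (s x) * h x) ν)
    (hmass : ∫ x, h x ∂ν = 0) (hmean : ∫ x, s x * h x ∂ν = 0)
    (hlow : ∀ x, s x < p → 0 ≤ h x) (hmid : ∀ x, p < s x → s x < q → h x ≤ 0)
    (hhigh : ∀ x, q < s x → 0 ≤ h x) :
    0 ≤ ∫ x, φ (s x) * h x ∂ν := by
  set ℓ : ℝ → ℝ := fun t => φ p + slope φ p q * (t - p) with hℓ
  have hsign : ∀ x, 0 ≤ (φ (s x) - ℓ (s x)) * h x := by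
    intro x
    by_cases hin : s x ∈ Ioo p q
    · exact mul_nonneg_of_nonpos_of_nonpos
        (sub_nonpos.2 (hφ.le_secant trivial trivial hin.1.le hin.2.le)) (hmid x hin.1 hin.2)
    have habove : 0 ≤ φ (s x) - ℓ (s x) :=
      sub_nonneg.2 (hφ.secant_le trivial trivial trivial hpq hin)
    rcases lt_or_ge (s x) p with hl | hl
    · exact mul_nonneg habove (hlow x hl)
    rcases lt_or_ge q (s x) with hr | hr
    · exact mul_nonneg habove (hhigh x hr)
    have hbelow : φ (s x) - ℓ (s x) ≤ 0 := sub_nonpos.2 (hφ.le_secant trivial trivial hl hr)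
    rw [le_antisymm hbelow habove, zero_mul]
  have hℓ_eq : (fun x => ℓ (s x) * h x) =
      fun x => (φ p - slope φ p q * p) * h x + slope φ p q * (s x * h x) := by
    ext x; simp only [hℓ]; ring
  have hℓi : Integrable (fun x => ℓ (s x) * h x) ν := by
    rw [hℓ_eq]; exact (hh.const_mul _).add (hsh.const_mul _)
  have hℓ_int : ∫ x, ℓ (s x) * h x ∂ν = 0 := by
    rw [hℓ_eq, integral_add (hh.const_mul _) (hsh.const_mul _), integral_const_mul,
      integral_const_mul, hmass, hmean, mul_zero, mul_zero, add_zero]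
  calc 0 ≤ ∫ x, (φ (s x) - ℓ (s x)) * h x ∂ν := integral_nonneg hsign
    _ = ∫ x, φ (s x) * h x ∂ν := by
      simp_rw [sub_mul]; rw [integral_sub hφh hℓi, hℓ_int, sub_zero]

section Density

variable {Ω α : Type*} [MeasurableSpace Ω] [MeasurableSpace α] {μ : Measure Ω} {ν : Measure α}
  {X : Ω → α} {f u : α → ℝ}

lemma integrable_comp_iff_of_map_eq_withDensity (hX : Measurable X) (hf : Measurable f)
    (hfnn : ∀ x, 0 ≤ f x) (hfd : μ.map X = ν.withDensity fun x => ENNReal.ofReal (f x))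
    (hu : Measurable u) :
    Integrable (fun ω => u (X ω)) μ ↔ Integrable (fun x => u x * f x) ν := by
  refine (integrable_map_measure hu.aestronglyMeasurable hX.aemeasurable).symm.trans ?_
  rw [hfd, integrable_withDensity_iff hf.ennreal_ofReal
    (.of_forall fun _ => ENNReal.ofReal_lt_top)]
  simp only [ENNReal.toReal_ofReal (hfnn _)]

lemma integral_comp_eq_of_map_eq_withDensity (hX : Measurable X) (hf : Measurable f)
    (hfnn : ∀ x, 0 ≤ f x) (hfd : μ.map X = ν.withDensity fun x => ENNReal.ofReal (f x))
    (hu : Measurable u) :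
    ∫ ω, u (X ω) ∂μ = ∫ x, u x * f x ∂ν := by
  rw [← integral_map hX.aemeasurable hu.aestronglyMeasurable, hfd,
    integral_withDensity_eq_integral_toReal_smul hf.ennreal_ofReal
      (.of_forall fun _ => ENNReal.ofReal_lt_top)]
  simp only [ENNReal.toReal_ofReal (hfnn _), smul_eq_mul, mul_comm]

end Density

theorem integral_convex_comp_le_of_sign_changes {Ω α : Type*} [MeasurableSpace Ω]
    [MeasurableSpace α] {μ : Measure Ω} [IsFiniteMeasure μ] {ν : Measure α} {X Y : Ω → α}
    (hX : Measurable X) (hY : Measurable Y) {f g : α → ℝ} (hf : Measurable f) (hg : Measurable g)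
    (hfnn : ∀ x, 0 ≤ f x) (hgnn : ∀ x, 0 ≤ g x)
    (hfd : μ.map X = ν.withDensity fun x => ENNReal.ofReal (f x))
    (hgd : μ.map Y = ν.withDensity fun x => ENNReal.ofReal (g x))
    {s : α → ℝ} (hs : Measurable s) (hsX : Integrable (fun ω => s (X ω)) μ)
    (hsY : Integrable (fun ω => s (Y ω)) μ) (hmean : ∫ ω, s (X ω) ∂μ = ∫ ω, s (Y ω) ∂μ)
    {p q : ℝ} (hpq : p < q) (hlow : ∀ x, s x < p → f x ≤ g x)
    (hmid : ∀ x, p < s x → s x < q → g x ≤ f x) (hhigh : ∀ x, q < s x → f x ≤ g x)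
    {φ : ℝ → ℝ} (hφ : ConvexOn ℝ univ φ) (hφX : Integrable (fun ω => φ (s (X ω))) μ)
    (hφY : Integrable (fun ω => φ (s (Y ω))) μ) :
    ∫ ω, φ (s (X ω)) ∂μ ≤ ∫ ω, φ (s (Y ω)) ∂μ := by
  have transfer : ∀ u : α → ℝ, Measurable u → Integrable (fun ω => u (X ω)) μ →
      Integrable (fun ω => u (Y ω)) μ → Integrable (fun x => u x * (g x - f x)) ν ∧
        ∫ x, u x * (g x - f x) ∂ν = ∫ ω, u (Y ω) ∂μ - ∫ ω, u (X ω) ∂μ := by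
    intro u hu huX huY
    have hfi := (integrable_comp_iff_of_map_eq_withDensity hX hf hfnn hfd hu).1 huX
    have hgi := (integrable_comp_iff_of_map_eq_withDensity hY hg hgnn hgd hu).1 huY
    simp_rw [mul_sub]
    refine ⟨hgi.sub hfi, ?_⟩
    rw [integral_sub hgi hfi, integral_comp_eq_of_map_eq_withDensity hX hf hfnn hfd hu,
      integral_comp_eq_of_map_eq_withDensity hY hg hgnn hgd hu]
  have hφm : Measurable φ := (continuousOn_univ.1 (hφ.continuousOn isOpen_univ)).measurable
  obtain ⟨h1i, h1e⟩ := transfer (fun _ => 1) measurable_const (integrable_const 1)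
    (integrable_const 1)
  obtain ⟨hsi, hse⟩ := transfer s hs hsX hsY
  obtain ⟨hφi, hφe⟩ := transfer (φ ∘ s) (hφm.comp hs) hφX hφY
  have := hφ.integral_comp_mul_nonneg_of_sign_changes hpq (by simpa using h1i) hsi hφi
    (by simpa using h1e) (by rw [hse, hmean, sub_self]) (fun x hx => sub_nonneg.2 (hlow x hx))
    (fun x hx hx' => sub_nonpos.2 (hmid x hx hx')) (fun x hx => sub_nonneg.2 (hhigh x hx))
  rw [← sub_nonneg]
  exact this.trans_eq hφe

theorem stmt9_general {Ω : Type*} [MeasurableSpace Ω] (μ : Measure Ω) [IsProbabilityMeasure μ]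
    (X Y : Ω → ℝ) (hX : Measurable X) (hY : Measurable Y)
    (f g : ℝ → ℝ) (hfc : Continuous f) (hgc : Continuous g)
    (hfd : Measure.map X μ = MeasureTheory.volume.withDensity (fun x => ENNReal.ofReal (f x)))
    (hgd : Measure.map Y μ = MeasureTheory.volume.withDensity (fun x => ENNReal.ofReal (g x)))
    (hfnn : ∀ x, 0 ≤ f x) (hgnn : ∀ x, 0 ≤ g x)
    (hX2int : Integrable (fun ω => (X ω) ^ 2) μ)
    (hY2int : Integrable (fun ω => (Y ω) ^ 2) μ)
    (hX2 : ∫ ω, (X ω) ^ 2 ∂μ = 1) (hY2 : ∫ ω, (Y ω) ^ 2 ∂μ = 1)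
    (a b : ℝ) (ha : 0 < a) (hab : a < b)
    (hcenter : ∀ x, |x| < a → f x ≤ g x)
    (hmid : ∀ x, a < |x| → |x| < b → g x ≤ f x)
    (htail : ∀ x, b < |x| → f x ≤ g x) :
    LeCx μ (fun ω => (X ω) ^ 2) (fun ω => (Y ω) ^ 2) ∧
      (Integrable (fun ω => (X ω) ^ 4) μ → Integrable (fun ω => (Y ω) ^ 4) μ →
        ∫ ω, (X ω) ^ 4 ∂μ ≤ ∫ ω, (Y ω) ^ 4 ∂μ) := by
  have hb : 0 < b := ha.trans hab
  have hcx : LeCx μ (fun ω => (X ω) ^ 2) (fun ω => (Y ω) ^ 2) := fun φ hφ =>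
    integral_convex_comp_le_of_sign_changes hX hY hfc.measurable hgc.measurable hfnn hgnn hfd hgd
      (measurable_id.pow_const 2) hX2int hY2int (hX2.trans hY2.symm)
      (pow_lt_pow_left₀ hab ha.le two_ne_zero)
      (fun x hx => hcenter x (abs_lt_of_sq_lt_sq hx ha.le))
      (fun x hx hx' => hmid x (by simpa [abs_of_pos ha] using sq_lt_sq.1 hx)
        (abs_lt_of_sq_lt_sq hx' hb.le))
      (fun x hx => htail x (by simpa [abs_of_pos hb] using sq_lt_sq.1 hx)) hφ
  refine ⟨hcx, fun h4X h4Y => ?_⟩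
  have h := hcx (· ^ 2) (Even.convexOn_pow even_two)
  simp only [Function.comp_def, ← pow_mul] at h
  exact h h4X h4Y

/-- let `X`, `Y` be symmetric with continuous densities `f`, `g` and
`E[X²] = E[Y²] = 1`.  If `g - f` has sign sequence `+,-,+,-,+` (reading from `-∞`), i.e.
there are symmetric crossing points `±a`, `±b` with `0 < a < b` such that `f ≤ g` in the
center `|x| < a` and in the tails `|x| > b`, and `g ≤ f` in the intermediate regions
`a < |x| < b`, then `X² ≤_cx Y²`; consequently, whenever fourth moments are finite,
`E[X⁴] ≤ E[Y⁴]` (comparison of Pearson's kurtosis). -/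
theorem stmt9 {Ω : Type*} [MeasurableSpace Ω] (μ : Measure Ω) [IsProbabilityMeasure μ]
    (X Y : Ω → ℝ) (hX : Measurable X) (hY : Measurable Y)
    (f g : ℝ → ℝ) (hfc : Continuous f) (hgc : Continuous g)
    (hfd : Measure.map X μ = MeasureTheory.volume.withDensity (fun x => ENNReal.ofReal (f x)))
    (hgd : Measure.map Y μ = MeasureTheory.volume.withDensity (fun x => ENNReal.ofReal (g x)))
    (hfsym : ∀ x, f (-x) = f x) (hgsym : ∀ x, g (-x) = g x)
    (hfnn : ∀ x, 0 ≤ f x) (hgnn : ∀ x, 0 ≤ g x)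
    (hX2int : Integrable (fun ω => (X ω) ^ 2) μ)
    (hY2int : Integrable (fun ω => (Y ω) ^ 2) μ)
    (hX2 : ∫ ω, (X ω) ^ 2 ∂μ = 1) (hY2 : ∫ ω, (Y ω) ^ 2 ∂μ = 1)
    (a b : ℝ) (ha : 0 < a) (hab : a < b)
    (hcenter : ∀ x, |x| < a → f x ≤ g x)
    (hmid : ∀ x, a < |x| → |x| < b → g x ≤ f x)
    (htail : ∀ x, b < |x| → f x ≤ g x) :
    LeCx μ (fun ω => (X ω) ^ 2) (fun ω => (Y ω) ^ 2) ∧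
      (Integrable (fun ω => (X ω) ^ 4) μ → Integrable (fun ω => (Y ω) ^ 4) μ →
        ∫ ω, (X ω) ^ 4 ∂μ ≤ ∫ ω, (Y ω) ^ 4 ∂μ) :=
  stmt9_general μ X Y hX hY f g hfc hgc hfd hgd hfnn hgnn hX2int hY2int hX2 hY2 a b ha hab hcenter
    hmid htail
end

section
/- Let φ : ℝ → ℝ be C² and convex, g₁,...,g_m : ℝ → ℝ be C², convex and nonnegative, a, b ∈ ℝ, and P_m = {−1,1}^m. Then the function h(u) = Σ_{p ∈ P_m} φ(a + bu + Σ_{i=1}^m p_i g_i(u)) is convex. -/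
/-!
Write `h u = S (a + b u) (g u)` with `S t x = ∑_p φ (t + ∑ i, p i * x i)`. The function `S` is
jointly convex in `(t, x)`, as a sum of `φ` composed with linear maps. It is also nondecreasing in
each coordinate `x i ≥ 0`: grouping the sign vectors in pairs that differ only at `i` leaves sums of
`s ↦ φ (c + s) + φ (c - s)`, which is even and convex, hence nondecreasing on `[0, ∞)`. Convexity
of `h` then follows exactly as for a nondecreasing convex function composed with convex functions.
-/

open Set

theorem ConvexOn.map_add_add_map_sub_le {φ : ℝ → ℝ} (hφ : ConvexOn ℝ univ φ) (c : ℝ) {s t : ℝ}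
    (hst : |s| ≤ t) : φ (c + s) + φ (c - s) ≤ φ (c + t) + φ (c - t) := by
  have hψ : ConvexOn ℝ univ fun z => φ (c + z) + φ (c - z) := by
    have h := hφ.translate_right c
    rw [preimage_univ] at h
    exact (h.add (h.comp_linearMap (-LinearMap.id))).congr fun z _ => by simp [sub_eq_add_neg]
  have hs : s ∈ segment ℝ (-t) t := by
    rw [segment_eq_Icc (by linarith [abs_nonneg s])]
    exact abs_le.mp hst
  calc φ (c + s) + φ (c - s) ≤ max (φ (c + -t) + φ (c - -t)) (φ (c + t) + φ (c - t)) :=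
        hψ.le_on_segment (mem_univ _) (mem_univ _) hs
    _ = φ (c + t) + φ (c - t) := by rw [← sub_eq_add_neg, sub_neg_eq_add, add_comm, max_self]

noncomputable def signSum (φ : ℝ → ℝ) (t : ℝ) {n : ℕ} (x : Fin n → ℝ) : ℝ :=
  ∑ p : Fin n → Bool, φ (t + ∑ i, (if p i then (1:ℝ) else -1) * x i)

theorem signSum_succ (φ : ℝ → ℝ) (t : ℝ) {n : ℕ} (x : Fin (n + 1) → ℝ) :
    signSum φ t x = ∑ q : Fin n → Bool,
      (φ (t + ∑ i, (if q i then (1:ℝ) else -1) * x i.succ + x 0) +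
        φ (t + ∑ i, (if q i then (1:ℝ) else -1) * x i.succ - x 0)) := by
  rw [signSum, ← (Fin.consEquiv fun _ => Bool).sum_comp, Fintype.sum_prod_type, Fintype.sum_bool,
    ← Finset.sum_add_distrib]
  refine Finset.sum_congr rfl fun q _ => ?_
  simp only [Fin.sum_univ_succ, Fin.consEquiv_apply, Fin.cons_zero, Fin.cons_succ]
  congr 2 <;> simp only [if_true, Bool.false_eq_true, if_false] <;> ring

theorem signSum_mono {φ : ℝ → ℝ} (hφ : ConvexOn ℝ univ φ) {n : ℕ} {x y : Fin n → ℝ}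
    (hx : 0 ≤ x) (hxy : x ≤ y) (t : ℝ) : signSum φ t x ≤ signSum φ t y := by
  induction n generalizing t with
  | zero => simp [signSum, Subsingleton.elim x y]
  | succ n ih =>
    have tail_le (s : ℝ) : signSum φ s (Fin.tail x) ≤ signSum φ s (Fin.tail y) :=
      ih (fun i => hx i.succ) (fun i => hxy i.succ) s
    calc signSum φ t x = signSum φ (t + x 0) (Fin.tail x) + signSum φ (t - x 0) (Fin.tail x) := by
          rw [signSum_succ, signSum, signSum, ← Finset.sum_add_distrib]
          refine Finset.sum_congr rfl fun q _ => ?_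
          simp only [Fin.tail]
          ring_nf
      _ ≤ signSum φ (t + x 0) (Fin.tail y) + signSum φ (t - x 0) (Fin.tail y) :=
          add_le_add (tail_le _) (tail_le _)
      _ = ∑ q : Fin n → Bool,
            (φ (t + ∑ i, (if q i then (1:ℝ) else -1) * y i.succ + x 0) +
              φ (t + ∑ i, (if q i then (1:ℝ) else -1) * y i.succ - x 0)) := by
          rw [signSum, signSum, ← Finset.sum_add_distrib]
          refine Finset.sum_congr rfl fun q _ => ?_
          simp only [Fin.tail]
          ring_nf
      _ ≤ signSum φ t y := by
          rw [signSum_succ]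
          exact Finset.sum_le_sum fun q _ =>
            hφ.map_add_add_map_sub_le _ ((abs_of_nonneg (hx 0)).trans_le (hxy 0))

theorem convexOn_signSum {φ : ℝ → ℝ} (hφ : ConvexOn ℝ univ φ) (n : ℕ) :
    ConvexOn ℝ univ fun z : ℝ × (Fin n → ℝ) => signSum φ z.1 z.2 := by
  refine ⟨convex_univ, fun z _ z' _ α β hα hβ hαβ => ?_⟩
  simp only [signSum, smul_eq_mul, Finset.mul_sum, ← Finset.sum_add_distrib]
  refine Finset.sum_le_sum fun p _ => ?_
  have hp := hφ.2 (mem_univ (z.1 + ∑ i, (if p i then (1:ℝ) else -1) * z.2 i))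
    (mem_univ (z'.1 + ∑ i, (if p i then (1:ℝ) else -1) * z'.2 i)) hα hβ hαβ
  simp only [smul_eq_mul] at hp
  convert hp using 2
  simp only [Prod.fst_add, Prod.snd_add, Prod.smul_fst, Prod.smul_snd, Pi.add_apply, Pi.smul_apply,
    smul_eq_mul, mul_add, Finset.mul_sum, Finset.sum_add_distrib]
  ring_nf

theorem stmt10_general (m : ℕ) (φ : ℝ → ℝ) (g : Fin m → ℝ → ℝ) (a b : ℝ)
    (hφcx : ConvexOn ℝ univ φ)
    (hgcx : ∀ i, ConvexOn ℝ univ (g i))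
    (hgnn : ∀ i u, 0 ≤ g i u) :
    ConvexOn ℝ univ (fun u =>
      ∑ p : Fin m → Bool,
        φ (a + b * u + ∑ i, (if p i then (1:ℝ) else -1) * g i u)) := by
  let z : ℝ → ℝ × (Fin m → ℝ) := fun u => (a + b * u, fun i => g i u)
  refine ⟨convex_univ, fun u _ v _ α β hα hβ hαβ => ?_⟩
  change signSum φ (z (α • u + β • v)).1 (z (α • u + β • v)).2
    ≤ α • signSum φ (z u).1 (z u).2 + β • signSum φ (z v).1 (z v).2
  have hz : (z (α • u + β • v)).1 = (α • z u + β • z v).1 := by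
    simp only [z, Prod.fst_add, Prod.smul_fst, smul_eq_mul]
    linear_combination a * hαβ.symm
  calc signSum φ (z (α • u + β • v)).1 (z (α • u + β • v)).2
      ≤ signSum φ (z (α • u + β • v)).1 (α • z u + β • z v).2 :=
        signSum_mono hφcx (fun i => hgnn i _)
          (fun i => (hgcx i).2 (mem_univ u) (mem_univ v) hα hβ hαβ) _
    _ ≤ α • signSum φ (z u).1 (z u).2 + β • signSum φ (z v).1 (z v).2 := by
        rw [hz]
        exact (convexOn_signSum hφcx m).2 (mem_univ _) (mem_univ _) hα hβ hαβ

/-- if `φ : ℝ → ℝ` is `C²` and convex, `g₁, …, g_m : ℝ → ℝ` are `C²`, convex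
and nonnegative, and `a, b ∈ ℝ`, then
`h(u) = Σ_{p ∈ {-1,1}^m} φ(a + b·u + Σ_i p_i g_i(u))` is convex. -/
theorem stmt10 (m : ℕ) (φ : ℝ → ℝ) (g : Fin m → ℝ → ℝ) (a b : ℝ)
    (hφ : ContDiff ℝ 2 φ) (hφcx : ConvexOn ℝ univ φ)
    (hg : ∀ i, ContDiff ℝ 2 (g i)) (hgcx : ∀ i, ConvexOn ℝ univ (g i))
    (hgnn : ∀ i u, 0 ≤ g i u) :
    ConvexOn ℝ univ (fun u =>
      ∑ p : Fin m → Bool,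
        φ (a + b * u + ∑ i, (if p i then (1:ℝ) else -1) * g i u)) :=
  stmt10_general m φ g a b hφcx hgcx hgnn
end

section
/- Let φ : ℝ^n → ℝ be C², convex and supermodular, and g₁,...,g_n : ℝ → ℝ be C², convex and nonnegative. Then h(u) = Σ_{p ∈ {−1,1}^n} φ(p₁g₁(u), ..., p_n g_n(u)) is convex. -/
open Set

/-- A function `φ : (Fin n → ℝ) → ℝ` is supermodular if
`φ(x) + φ(y) ≤ φ(x ⊓ y) + φ(x ⊔ y)` for all `x, y`. -/
def Supermodular {n : ℕ} (φ : (Fin n → ℝ) → ℝ) : Prop :=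
  ∀ x y : Fin n → ℝ, φ x + φ y ≤ φ (x ⊓ y) + φ (x ⊔ y)

section Aux

variable {n : ℕ} {φ : (Fin n → ℝ) → ℝ}

/-- Slice convexity: `φ(x[i:=t]) + φ(x[i:=-t]) ≤ φ(x[i:=s]) + φ(x[i:=-s])` when `|t| ≤ s`. -/
lemma slice_ineq (hφcx : ConvexOn ℝ univ φ) (x : Fin n → ℝ) (i : Fin n)
    {t s : ℝ} (hts : |t| ≤ s) :
    φ (Function.update x i t) + φ (Function.update x i (-t)) ≤
      φ (Function.update x i s) + φ (Function.update x i (-s)) := by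
  rcases eq_or_lt_of_le ((abs_nonneg t).trans hts) with hs | hs
  · have ht : t = 0 := abs_eq_zero.mp (le_antisymm (by rw [← hs] at hts; exact hts) (abs_nonneg t))
    rw [ht, ← hs]
  · have hs0 : s ≠ 0 := ne_of_gt hs
    have htl : -s ≤ t := (abs_le.mp hts).1
    have htu : t ≤ s := (abs_le.mp hts).2
    set lam : ℝ := (s + t) / (2 * s) with hlam
    have hl0 : 0 ≤ lam := div_nonneg (by linarith) (by linarith)
    have hl1 : 0 ≤ 1 - lam := by
      have : lam ≤ 1 := by rw [hlam, div_le_one (by linarith)]; linarith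
      linarith
    have hmul : lam * (2 * s) = s + t := by
      rw [hlam]; field_simp
    have h1 : Function.update x i t =
        lam • Function.update x i s + (1 - lam) • Function.update x i (-s) := by
      funext j
      rcases eq_or_ne j i with hj | hj
      · subst hj
        simp only [Pi.add_apply, Pi.smul_apply, Function.update_self, smul_eq_mul]
        linear_combination -hmul
      · simp only [Pi.add_apply, Pi.smul_apply, Function.update_of_ne hj, smul_eq_mul]
        ring
    have h2 : Function.update x i (-t) =
        (1 - lam) • Function.update x i s + lam • Function.update x i (-s) := by
      funext j
      rcases eq_or_ne j i with hj | hj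
      · subst hj
        simp only [Pi.add_apply, Pi.smul_apply, Function.update_self, smul_eq_mul]
        linear_combination hmul
      · simp only [Pi.add_apply, Pi.smul_apply, Function.update_of_ne hj, smul_eq_mul]
        ring
    have c1 := hφcx.2 (mem_univ (Function.update x i s)) (mem_univ (Function.update x i (-s)))
      hl0 hl1 (by ring)
    have c2 := hφcx.2 (mem_univ (Function.update x i s)) (mem_univ (Function.update x i (-s)))
      hl1 hl0 (by ring)
    rw [← h1] at c1
    rw [← h2] at c2
    simp only [smul_eq_mul] at c1 c2
    calc φ (Function.update x i t) + φ (Function.update x i (-t))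
        ≤ (lam * φ (Function.update x i s) + (1 - lam) * φ (Function.update x i (-s))) +
          ((1 - lam) * φ (Function.update x i s) + lam * φ (Function.update x i (-s))) :=
          add_le_add c1 c2
      _ = φ (Function.update x i s) + φ (Function.update x i (-s)) := by ring

end Aux

/-- if `φ : ℝⁿ → ℝ` is `C²`, convex and supermodular, and `g₁, …, g_n` are
`C²`, convex and nonnegative, then
`h(u) = Σ_{p ∈ {-1,1}^n} φ(p₁g₁(u), …, p_n g_n(u))` is convex. -/
theorem stmt13 (n : ℕ) (φ : (Fin n → ℝ) → ℝ) (g : Fin n → ℝ → ℝ)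
    (hφ : ContDiff ℝ 2 φ) (hφcx : ConvexOn ℝ univ φ) (hφsm : Supermodular φ)
    (hg : ∀ i, ContDiff ℝ 2 (g i)) (hgcx : ∀ i, ConvexOn ℝ univ (g i))
    (hgnn : ∀ i u, 0 ≤ g i u) :
    ConvexOn ℝ univ (fun u =>
      ∑ p : Fin n → Bool, φ (fun i => (if p i then (1:ℝ) else -1) * g i u)) := by
  classical
  set c : (Fin n → Bool) → Fin n → ℝ := fun p i => if p i then (1:ℝ) else -1 with hc
  set F : (Fin n → ℝ) → ℝ := fun a => ∑ p : Fin n → Bool, φ (fun i => c p i * a i) with hF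
  -- F is convex (as an inequality)
  have Fconv : ∀ (x y : Fin n → ℝ) (a b : ℝ), 0 ≤ a → 0 ≤ b → a + b = 1 →
      F (fun i => a * x i + b * y i) ≤ a * F x + b * F y := by
    intro x y a b ha hb hab
    have step : ∀ p : Fin n → Bool,
        φ (fun i => c p i * (a * x i + b * y i)) ≤
          a * φ (fun i => c p i * x i) + b * φ (fun i => c p i * y i) := by
      intro p
      have harg : (fun i => c p i * (a * x i + b * y i)) =
          a • (fun i => c p i * x i) + b • (fun i => c p i * y i) := by
        funext i
        simp only [Pi.add_apply, Pi.smul_apply, smul_eq_mul]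
        ring
      rw [harg]
      simpa using hφcx.2 (mem_univ _) (mem_univ _) ha hb hab
    calc F (fun i => a * x i + b * y i)
        ≤ ∑ p : Fin n → Bool,
            (a * φ (fun i => c p i * x i) + b * φ (fun i => c p i * y i)) :=
          Finset.sum_le_sum fun p _ => step p
      _ = a * F x + b * F y := by
          rw [Finset.sum_add_distrib, ← Finset.mul_sum, ← Finset.mul_sum]
  -- F is monotone in one coordinate on the nonneg part
  have mono_one : ∀ (a : Fin n → ℝ) (i : Fin n) (t s : ℝ), 0 ≤ t → t ≤ s →
      F (Function.update a i t) ≤ F (Function.update a i s) := by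
    intro a i t s ht hts
    set flip : (Fin n → Bool) → (Fin n → Bool) := fun p => Function.update p i (!p i) with hflip
    have hinv : Function.Involutive flip := by
      intro p
      funext j
      rcases eq_or_ne j i with hj | hj
      · rw [hj]; simp [hflip]
      · simp [hflip, Function.update_of_ne hj]
    have key : ∀ (v : ℝ) (p : Fin n → Bool),
        (fun j => c p j * Function.update a i v j) =
          Function.update (fun j => c p j * a j) i (c p i * v) := by
      intro v p
      funext j
      rcases eq_or_ne j i with hj | hj
      · rw [hj]; simp
      · simp [Function.update_of_ne hj]
    have keyflip : ∀ (v : ℝ) (p : Fin n → Bool),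
        (fun j => c (flip p) j * Function.update a i v j) =
          Function.update (fun j => c p j * a j) i (-(c p i * v)) := by
      intro v p
      funext j
      rcases eq_or_ne j i with hj | hj
      · rw [hj]
        simp only [Function.update_self, hflip, hc]
        cases hpj : p i <;> simp [hpj]
      · simp [hflip, hc, Function.update_of_ne hj]
    have pair : ∀ (v : ℝ),
        2 * F (Function.update a i v) =
          ∑ p : Fin n → Bool,
            (φ (Function.update (fun j => c p j * a j) i (c p i * v)) +
             φ (Function.update (fun j => c p j * a j) i (-(c p i * v)))) := by
      intro v
      have e1 : ∑ p : Fin n → Bool,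
          φ (Function.update (fun j => c p j * a j) i (c p i * v)) =
          ∑ p : Fin n → Bool, φ (fun j => c p j * Function.update a i v j) :=
        Finset.sum_congr rfl fun p _ => by rw [← key v p]
      have e2 : ∑ p : Fin n → Bool,
          φ (Function.update (fun j => c p j * a j) i (-(c p i * v))) =
          ∑ p : Fin n → Bool, φ (fun j => c p j * Function.update a i v j) := by
        calc ∑ p : Fin n → Bool,
            φ (Function.update (fun j => c p j * a j) i (-(c p i * v)))
            = ∑ p : Fin n → Bool, φ (fun j => c (flip p) j * Function.update a i v j) :=
              Finset.sum_congr rfl fun p _ => by rw [keyflip v p]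
          _ = ∑ p : Fin n → Bool, φ (fun j => c p j * Function.update a i v j) :=
              hinv.bijective.sum_comp (fun q => φ (fun j => c q j * Function.update a i v j))
      rw [Finset.sum_add_distrib, e1, e2]
      have : F (Function.update a i v) =
          ∑ p : Fin n → Bool, φ (fun j => c p j * Function.update a i v j) := rfl
      rw [this]; ring
    have hsum_le : ∑ p : Fin n → Bool,
          (φ (Function.update (fun j => c p j * a j) i (c p i * t)) +
           φ (Function.update (fun j => c p j * a j) i (-(c p i * t)))) ≤
        ∑ p : Fin n → Bool,
          (φ (Function.update (fun j => c p j * a j) i (c p i * s)) +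
           φ (Function.update (fun j => c p j * a j) i (-(c p i * s)))) := by
      refine Finset.sum_le_sum fun p _ => ?_
      cases hpj : p i
      · have hci : c p i = -1 := by simp [hc, hpj]
        rw [hci]
        have habs : |(-1 : ℝ) * t| ≤ s := by
          rw [abs_mul, abs_neg, abs_one, one_mul, abs_of_nonneg ht]; exact hts
        have hsl := slice_ineq hφcx (fun j => c p j * a j) i habs
        have hd1 : (-1 : ℝ) * s = -s := by ring
        rw [hd1, neg_neg]
        linarith [hsl]
      · have hci : c p i = 1 := by simp [hc, hpj]
        rw [hci, one_mul, one_mul]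
        exact slice_ineq hφcx (fun j => c p j * a j) i
          (by rw [abs_of_nonneg ht]; exact hts)
    have h2 : 2 * F (Function.update a i t) ≤ 2 * F (Function.update a i s) := by
      rw [pair t, pair s]; exact hsum_le
    linarith
  -- F is monotone on the nonneg orthant
  have mono : ∀ (t s : Fin n → ℝ), (∀ i, 0 ≤ t i) → (∀ i, t i ≤ s i) → F t ≤ F s := by
    intro t s ht hts
    set m : ℕ → Fin n → ℝ := fun k i => if (i : ℕ) < k then s i else t i with hm
    have h0 : m 0 = t := by funext i; simp [hm]
    have hn : m n = s := by funext i; simp [hm, i.isLt]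
    have step : ∀ k, F (m k) ≤ F (m (k + 1)) := by
      intro k
      by_cases hk : k < n
      · have e1 : m k = Function.update (m (k + 1)) ⟨k, hk⟩ (t ⟨k, hk⟩) := by
          funext j
          rcases eq_or_ne j ⟨k, hk⟩ with hj | hj
          · rw [hj]; simp [hm]
          · have hjk : (j : ℕ) ≠ k := fun h => hj (Fin.ext h)
            rw [Function.update_of_ne hj]
            simp only [hm]
            by_cases h : (j : ℕ) < k
            · rw [if_pos h, if_pos (by omega)]
            · rw [if_neg h, if_neg (by omega)]
        have e2 : m (k + 1) = Function.update (m (k + 1)) ⟨k, hk⟩ (s ⟨k, hk⟩) := by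
          funext j
          rcases eq_or_ne j ⟨k, hk⟩ with hj | hj
          · rw [hj]; simp [hm]
          · rw [Function.update_of_ne hj]
        rw [e1]
        nth_rewrite 2 [e2]
        exact mono_one (m (k + 1)) ⟨k, hk⟩ (t ⟨k, hk⟩) (s ⟨k, hk⟩) (ht _) (hts _)
      · have : m (k + 1) = m k := by
          funext j
          have hjn : (j : ℕ) < n := j.isLt
          simp only [hm]
          rw [if_pos (by omega), if_pos (by omega)]
        rw [this]
    have chain : ∀ k, F (m 0) ≤ F (m k) := by
      intro k
      induction k with
      | zero => exact le_refl _
      | succ k ih => exact ih.trans (step k)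
    have := chain n
    rwa [h0, hn] at this
  -- putting it together
  refine ⟨convex_univ, fun u _ v _ a b ha hb hab => ?_⟩
  have habu : ∀ i, g i (a • u + b • v) ≤ a * g i u + b * g i v := by
    intro i
    have := (hgcx i).2 (mem_univ u) (mem_univ v) ha hb hab
    simpa [smul_eq_mul] using this
  have h1 : F (fun i => g i (a • u + b • v)) ≤ F (fun i => a * g i u + b * g i v) :=
    mono _ _ (fun i => hgnn i _) habu
  have h2 : F (fun i => a * g i u + b * g i v) ≤
      a * F (fun i => g i u) + b * F (fun i => g i v) :=
    Fconv (fun i => g i u) (fun i => g i v) a b ha hb hab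
  calc (∑ p : Fin n → Bool, φ (fun i => c p i * g i (a • u + b • v)))
      = F (fun i => g i (a • u + b • v)) := rfl
    _ ≤ a * F (fun i => g i u) + b * F (fun i => g i v) := h1.trans h2
    _ = a * (∑ p : Fin n → Bool, φ (fun i => c p i * g i u)) +
        b * (∑ p : Fin n → Bool, φ (fun i => c p i * g i v)) := rfl
end

section
/- In model M1 with independent symmetric innovations, for any supermodular and convex φ : ℝ^{n+1} → ℝ and any k, the function h_k(x) = E[φ(X₀, X₁, ..., X_n) | ε_k = x] is convex in x. -/
open MeasureTheory ProbabilityTheory Set Finset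

/-!
Fix the innovations `e_j`, `j ≠ k`, and let `γ x` be the observation vector when `ε_k = x`.
Flipping the signs of some `e_j`, `j ≠ k`, flips the signs of the corresponding observations and
nothing else, because the volatilities only see `|e_j|`; by independence and symmetry it does not
change the joint law of the innovations. So `h_k` is the average over all such sign patterns `s`
of `x ↦ E ∑_s φ (s • γ x)`, and it suffices to show that `x ↦ ∑_s φ (s • γ x)` is convex.

For `j ≠ k` we have `γ_j x = σ_j(x) e_j`, where `σ_j` is nonnegative and convex in `x` because `f`
is increasing and convex in each variable; and `γ_k x = σ_k x` with `σ_k` independent of `x`.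
Hence `|γ_j (θa + ηb)| ≤ |θ γ_j a + η γ_j b|` for `j ≠ k`, with equality at `j = k`. A convex
function symmetrised over sign flips of a coordinate is nondecreasing in the modulus of that
coordinate (its even part is convex), so `∑_s φ (s • γ (θa + ηb)) ≤ ∑_s φ (s • (θ γ a + η γ b))`,
and convexity of `φ` bounds the right-hand side by `θ ∑_s φ (s • γ a) + η ∑_s φ (s • γ b)`.
-/

open Filter Function Topology

section SignFlip

variable {ι : Type*} [DecidableEq ι]

def signFlip (s : Finset ι) : (ι → ℝ) →ₗ[ℝ] ι → ℝ where
  toFun v i := if i ∈ s then -v i else v i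
  map_add' v w := by ext i; simp only [Pi.add_apply]; split_ifs <;> ring
  map_smul' c v := by
    ext i; simp only [Pi.smul_apply, smul_eq_mul, RingHom.id_apply]; split_ifs <;> ring

@[simp]
lemma signFlip_apply (s : Finset ι) (v : ι → ℝ) (i : ι) :
    signFlip s v i = if i ∈ s then -v i else v i := rfl

lemma abs_signFlip_apply (s : Finset ι) (v : ι → ℝ) (i : ι) : |signFlip s v i| = |v i| := by
  simp only [signFlip_apply]; split_ifs <;> simp

lemma signFlip_update_of_notMem {s : Finset ι} {j : ι} (hj : j ∉ s) (v : ι → ℝ) (p : ℝ) :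
    signFlip s (update v j p) = update (signFlip s v) j p := by
  ext i; by_cases hi : i = j <;> simp [hi, hj]

lemma signFlip_insert_update {s : Finset ι} {j : ι} (hj : j ∉ s) (v : ι → ℝ) (p : ℝ) :
    signFlip (insert j s) (update v j p) = update (signFlip s v) j (-p) := by
  ext i; by_cases hi : i = j <;> simp [hi, hj]

end SignFlip

section RealFunctions

lemma ConvexOn.add_comp_neg_le {g : ℝ → ℝ} (hg : ConvexOn ℝ univ g) {p q : ℝ}
    (hpq : |p| ≤ |q|) : g p + g (-p) ≤ g q + g (-q) := by
  have heven : ConvexOn ℝ univ (fun x => g x + g (-x)) :=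
    hg.add (hg.comp_linearMap (-LinearMap.id))
  have hp : p ∈ segment ℝ (-q) q := by
    rw [segment_eq_Icc', Set.mem_Icc]
    have := abs_le.1 hpq
    rcases le_total 0 q with hq | hq
    · simp_all [abs_of_nonneg hq]
    · simp_all [abs_of_nonpos hq]
  simpa [add_comm] using heven.le_on_segment trivial trivial hp

lemma ConvexOn.comp_of_monotoneOn_Ici {h u : ℝ → ℝ} (hh : ConvexOn ℝ (Set.Ici 0) h)
    (hmono : MonotoneOn h (Set.Ici 0)) (hu : ConvexOn ℝ univ u) (hu0 : ∀ x, 0 ≤ u x) :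
    ConvexOn ℝ univ (h ∘ u) := by
  refine ⟨convex_univ, fun a _ b _ θ η hθ hη hθη => ?_⟩
  have hcomb : 0 ≤ θ • u a + η • u b :=
    add_nonneg (smul_nonneg hθ (hu0 a)) (smul_nonneg hη (hu0 b))
  exact (hmono (hu0 _) hcomb (hu.2 trivial trivial hθ hη hθη)).trans
    (hh.2 (hu0 a) (hu0 b) hθ hη hθη)

lemma ConvexOn.continuousWithinAt_Ici_of_monotoneOn {g : ℝ → ℝ} {a : ℝ}
    (hg : ConvexOn ℝ (Set.Ici a) g) (hmono : MonotoneOn g (Set.Ici a)) :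
    ContinuousWithinAt g (Set.Ici a) a := by
  have hchord : ∀ x ∈ Set.Icc a (a + 1), g x ≤ g a + (x - a) * (g (a + 1) - g a) := by
    intro x ⟨hax, hxa⟩
    have h := hg.2 Set.self_mem_Ici (show a + 1 ∈ Set.Ici a by simp)
      (sub_nonneg.2 (show x - a ≤ 1 by linarith)) (sub_nonneg.2 hax) (by ring)
    rw [show (1 - (x - a)) • a + (x - a) • (a + 1) = x by simp only [smul_eq_mul]; ring] at h
    simp only [smul_eq_mul] at h
    linarith
  have hlim : Tendsto (fun x => g a + (x - a) * (g (a + 1) - g a)) (𝓝[Set.Ici a] a)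
      (𝓝 (g a)) := by
    have : ContinuousWithinAt (fun x => g a + (x - a) * (g (a + 1) - g a)) (Set.Ici a) a := by
      fun_prop
    simpa using this.tendsto
  refine tendsto_of_tendsto_of_tendsto_of_le_of_le' tendsto_const_nhds hlim ?_ ?_
  · filter_upwards [self_mem_nhdsWithin] with x hx using hmono Set.self_mem_Ici hx hx
  · filter_upwards [self_mem_nhdsWithin, nhdsWithin_le_nhds (gt_mem_nhds (lt_add_one a))]
      with x hx hx1 using hchord x ⟨hx, hx1.le⟩

end RealFunctions

section SeparatelyMonotone

variable {α β γ : Type*}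

lemma MonotoneOn.curry_left [Preorder α] [Preorder β] [Preorder γ]
    {f : α → β → γ} {s : Set α} {t : Set β}
    (hf : MonotoneOn (fun p : α × β => f p.1 p.2) (s ×ˢ t)) {y : β} (hy : y ∈ t) :
    MonotoneOn (fun x => f x y) s :=
  fun a ha b hb hab => hf (a := (a, y)) (b := (b, y)) ⟨ha, hy⟩ ⟨hb, hy⟩ ⟨hab, le_rfl⟩

lemma MonotoneOn.curry_right [Preorder α] [Preorder β] [Preorder γ]
    {f : α → β → γ} {s : Set α} {t : Set β}
    (hf : MonotoneOn (fun p : α × β => f p.1 p.2) (s ×ˢ t)) {x : α} (hx : x ∈ s) :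
    MonotoneOn (fun y => f x y) t :=
  fun a ha b hb hab => hf (a := (x, a)) (b := (x, b)) ⟨hx, ha⟩ ⟨hx, hb⟩ ⟨le_rfl, hab⟩

theorem Monotone.continuous_of_continuous_left_right
    [LinearOrder α] [TopologicalSpace α] [OrderTopology α] [DenselyOrdered α]
    [NoMinOrder α] [NoMaxOrder α]
    [LinearOrder β] [TopologicalSpace β] [OrderTopology β] [DenselyOrdered β]
    [NoMinOrder β] [NoMaxOrder β]
    [LinearOrder γ] [TopologicalSpace γ] [OrderTopology γ]
    {F : α × β → γ} (hF : Monotone F) (hleft : ∀ y, Continuous fun x => F (x, y))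
    (hright : ∀ x, Continuous fun y => F (x, y)) : Continuous F := by
  refine continuous_iff_continuousAt.2 fun p => tendsto_order.2 ⟨fun c hc => ?_, fun c hc => ?_⟩
  · obtain ⟨a, hap, ha⟩ := ((hleft p.2).continuousAt.eventually (lt_mem_nhds hc)).exists_lt
    obtain ⟨b, hbp, hb⟩ := ((hright a).continuousAt.eventually (lt_mem_nhds ha)).exists_lt
    filter_upwards [prod_mem_nhds (Ioi_mem_nhds hap) (Ioi_mem_nhds hbp)] with q hq
    exact hb.trans_le (hF (show (a, b) ≤ q from ⟨le_of_lt hq.1, le_of_lt hq.2⟩))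
  · obtain ⟨a, hpa, ha⟩ := ((hleft p.2).continuousAt.eventually (gt_mem_nhds hc)).exists_gt
    obtain ⟨b, hpb, hb⟩ := ((hright a).continuousAt.eventually (gt_mem_nhds ha)).exists_gt
    filter_upwards [prod_mem_nhds (Iio_mem_nhds hpa) (Iio_mem_nhds hpb)] with q hq
    exact (hF (show q ≤ (a, b) from ⟨le_of_lt hq.1, le_of_lt hq.2⟩)).trans_lt hb

end SeparatelyMonotone

lemma continuousOn_uncurry_of_monotoneOn_of_convexOn {f : ℝ → ℝ → ℝ}
    (hf_mono : MonotoneOn (fun p : ℝ × ℝ => f p.1 p.2) (Set.Ici 0 ×ˢ Set.Ici 0))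
    (hf_cx1 : ∀ y ∈ Set.Ici (0:ℝ), ConvexOn ℝ (Set.Ici 0) (fun x => f x y))
    (hf_cx2 : ∀ x ∈ Set.Ici (0:ℝ), ConvexOn ℝ (Set.Ici 0) (fun y => f x y)) :
    ContinuousOn (fun p : ℝ × ℝ => f p.1 p.2) (Set.Ici 0 ×ˢ Set.Ici 0) := by
  have hclamp : ∀ p : ℝ × ℝ, (max p.1 0, max p.2 0) ∈ Set.Ici (0:ℝ) ×ˢ Set.Ici (0:ℝ) :=
    fun p => mk_mem_prod (Set.mem_Ici.2 (le_max_right _ _)) (Set.mem_Ici.2 (le_max_right _ _))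
  have hcont : Continuous fun p : ℝ × ℝ => f (max p.1 0) (max p.2 0) := by
    refine Monotone.continuous_of_continuous_left_right
      (fun p q hpq => hf_mono (hclamp p) (hclamp q)
        ⟨max_le_max_right 0 hpq.1, max_le_max_right 0 hpq.2⟩)
      (fun y => ?_) (fun x => ?_)
    · have hy : max y 0 ∈ Set.Ici (0:ℝ) := le_max_right y 0
      exact ((hf_cx1 _ hy).continuousOn_Ici ((hf_cx1 _ hy).continuousWithinAt_Ici_of_monotoneOn
        (hf_mono.curry_left hy))).comp_continuous (by fun_prop) fun x => le_max_right x 0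
    · have hx : max x 0 ∈ Set.Ici (0:ℝ) := le_max_right x 0
      exact ((hf_cx2 _ hx).continuousOn_Ici ((hf_cx2 _ hx).continuousWithinAt_Ici_of_monotoneOn
        (hf_mono.curry_right hx))).comp_continuous (by fun_prop) fun y => le_max_right y 0
  refine hcont.continuousOn.congr fun p hp => ?_
  simp [max_eq_left (Set.mem_Ici.1 hp.1), max_eq_left (Set.mem_Ici.1 hp.2)]

section SignSymmetrization

variable {ι : Type*} [DecidableEq ι] {φ : (ι → ℝ) → ℝ}

lemma ConvexOn.comp_update (hφ : ConvexOn ℝ univ φ) (y : ι → ℝ) (j : ι) :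
    ConvexOn ℝ univ (fun t => φ (update y j t)) := by
  have hline : (fun t => update y j t) = AffineMap.lineMap (update y j 0) (update y j 1) := by
    ext t i
    rw [AffineMap.lineMap_apply_module]
    by_cases hi : i = j
    · simp [hi]
    · simp only [update_of_ne hi, Pi.add_apply, Pi.smul_apply, smul_eq_mul]; ring
  change ConvexOn ℝ univ (φ ∘ fun t => update y j t)
  rw [hline]
  exact hφ.comp_affineMap _

lemma ConvexOn.sum_signFlip_update_le (hφ : ConvexOn ℝ univ φ) {T : Finset ι} {j : ι}
    (hj : j ∈ T) (v : ι → ℝ) {p q : ℝ} (hpq : |p| ≤ |q|) :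
    ∑ s ∈ T.powerset, φ (signFlip s (update v j p)) ≤
      ∑ s ∈ T.powerset, φ (signFlip s (update v j q)) := by
  rw [← insert_erase hj, sum_powerset_insert (notMem_erase j T),
    sum_powerset_insert (notMem_erase j T), ← sum_add_distrib, ← sum_add_distrib]
  refine sum_le_sum fun s hs => ?_
  have hjs : j ∉ s := fun h => notMem_erase j T (mem_powerset.1 hs h)
  simp only [signFlip_update_of_notMem hjs, signFlip_insert_update hjs]
  exact (hφ.comp_update _ j).add_comp_neg_le hpq

theorem ConvexOn.sum_signFlip_mono (hφ : ConvexOn ℝ univ φ) {T : Finset ι} {v w : ι → ℝ}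
    (habs : ∀ i ∈ T, |v i| ≤ |w i|) (heq : ∀ i ∉ T, v i = w i) :
    ∑ s ∈ T.powerset, φ (signFlip s v) ≤ ∑ s ∈ T.powerset, φ (signFlip s w) := by
  let mix (D : Finset ι) : ι → ℝ := fun i => if i ∈ D then w i else v i
  have key : ∀ D ⊆ T, ∑ s ∈ T.powerset, φ (signFlip s v) ≤
      ∑ s ∈ T.powerset, φ (signFlip s (mix D)) := by
    intro D
    induction D using Finset.induction_on with
    | empty => simp [mix]
    | insert j D hjD ih =>
      intro hD
      have hj : j ∈ T := hD (mem_insert_self j D)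
      have hold : mix D = update (mix D) j (v j) :=
        (update_eq_self_iff.2 (by simp [mix, hjD])).symm
      have hnew : mix (insert j D) = update (mix D) j (w j) := by
        ext i; by_cases hi : i = j <;> simp [mix, hi]
      calc _ ≤ ∑ s ∈ T.powerset, φ (signFlip s (mix D)) :=
            ih ((Finset.subset_insert j D).trans hD)
        _ ≤ _ := by
          rw [hold, hnew]
          exact hφ.sum_signFlip_update_le hj _ (habs j hj)
  convert key T subset_rfl using 4 with s
  ext i
  by_cases hi : i ∈ T <;> simp [mix, hi, heq]

theorem ConvexOn.sum_signFlip (hφ : ConvexOn ℝ univ φ) (T : Finset ι) :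
    ConvexOn ℝ univ (fun v => ∑ s ∈ T.powerset, φ (signFlip s v)) := by
  refine ⟨convex_univ, fun v _ w _ a b ha hb hab => ?_⟩
  simp only [map_add, map_smul, smul_eq_mul, mul_sum, ← sum_add_distrib]
  exact sum_le_sum fun s _ => hφ.2 trivial trivial ha hb hab

theorem ConvexOn.sum_signFlip_comp (hφ : ConvexOn ℝ univ φ) {T : Finset ι} {γ : ℝ → ι → ℝ}
    (habs : ∀ a b θ η : ℝ, 0 ≤ θ → 0 ≤ η → θ + η = 1 →
      ∀ i ∈ T, |γ (θ * a + η * b) i| ≤ |θ * γ a i + η * γ b i|)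
    (heq : ∀ a b θ η : ℝ, 0 ≤ θ → 0 ≤ η → θ + η = 1 →
      ∀ i ∉ T, γ (θ * a + η * b) i = θ * γ a i + η * γ b i) :
    ConvexOn ℝ univ (fun x => ∑ s ∈ T.powerset, φ (signFlip s (γ x))) := by
  refine ⟨convex_univ, fun a _ b _ θ η hθ hη hθη => ?_⟩
  calc ∑ s ∈ T.powerset, φ (signFlip s (γ (θ • a + η • b)))
      ≤ ∑ s ∈ T.powerset, φ (signFlip s (θ • γ a + η • γ b)) :=
        hφ.sum_signFlip_mono (habs a b θ η hθ hη hθη) (heq a b θ η hθ hη hθη)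
    _ ≤ _ := (hφ.sum_signFlip T).2 trivial trivial hθ hη hθη

end SignSymmetrization

lemma identDistrib_signFlip {ι Ω : Type*} [DecidableEq ι] [MeasurableSpace Ω] {μ : Measure Ω}
    {ε : ι → Ω → ℝ} (hεmeas : ∀ j, Measurable (ε j)) (hindep : iIndepFun ε μ)
    (hsymm : ∀ j, Measure.map (ε j) μ = Measure.map (fun ω => -(ε j ω)) μ) (S : Finset ι) :
    IdentDistrib (fun ω => signFlip S (fun i => ε i ω)) (fun ω i => ε i ω) μ μ := by
  have hflip : ∀ i, Measurable fun x : ℝ => if i ∈ S then -x else x := fun i => by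
    split_ifs <;> fun_prop
  have hflipε : ∀ i, Measurable ((fun x : ℝ => if i ∈ S then -x else x) ∘ ε i) :=
    fun i => (hflip i).comp (hεmeas i)
  refine ⟨(measurable_pi_lambda _ hflipε).aemeasurable,
    (measurable_pi_lambda _ hεmeas).aemeasurable, ?_⟩
  change Measure.map (fun ω i => ((fun x : ℝ => if i ∈ S then -x else x) ∘ ε i) ω) μ = _
  rw [(hindep.comp _ hflip).map_fun_eq_infinitePi_map hflipε,
    hindep.map_fun_eq_infinitePi_map hεmeas]
  congr 1
  funext i
  by_cases hi : i ∈ S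
  · simp [hi, comp_def, hsymm i]
  · simp [hi, comp_def]

structure IsVolatility (f : ℝ → ℝ → ℝ) (s0 : ℝ) (g : (ℕ → ℝ) → ℕ → ℝ) : Prop where
  zero : ∀ v, g v 0 = s0
  succ : ∀ v j, g v (j + 1) = f |v j| (g v j)

namespace IsVolatility

variable {f : ℝ → ℝ → ℝ} {s0 : ℝ} {g : (ℕ → ℝ) → ℕ → ℝ}

lemma nonneg (hg : IsVolatility f s0 g) (hf_nonneg : ∀ x y, 0 ≤ x → 0 ≤ y → 0 ≤ f x y)
    (hs0 : 0 ≤ s0) (v : ℕ → ℝ) : ∀ m, 0 ≤ g v m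
  | 0 => hg.zero v ▸ hs0
  | m + 1 => hg.succ v m ▸ hf_nonneg _ _ (abs_nonneg _) (hg.nonneg hf_nonneg hs0 v m)

lemma congr_abs (hg : IsVolatility f s0 g) {v w : ℕ → ℝ} :
    ∀ {m}, (∀ i < m, |v i| = |w i|) → g v m = g w m
  | 0, _ => by rw [hg.zero, hg.zero]
  | m + 1, h => by
    rw [hg.succ, hg.succ, h m m.lt_succ_self,
      hg.congr_abs fun i hi => h i (hi.trans m.lt_succ_self)]

lemma update_of_le (hg : IsVolatility f s0 g) (v : ℕ → ℝ) {k m : ℕ} (hm : m ≤ k) (x : ℝ) :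
    g (update v k x) m = g v m :=
  hg.congr_abs fun i hi => by rw [update_of_ne (by omega)]

lemma convexOn_update (hg : IsVolatility f s0 g)
    (hf_mono : MonotoneOn (fun p : ℝ × ℝ => f p.1 p.2) (Set.Ici 0 ×ˢ Set.Ici 0))
    (hf_cx1 : ∀ y ∈ Set.Ici (0:ℝ), ConvexOn ℝ (Set.Ici 0) (fun x => f x y))
    (hf_cx2 : ∀ x ∈ Set.Ici (0:ℝ), ConvexOn ℝ (Set.Ici 0) (fun y => f x y))
    (hf_nonneg : ∀ x y, 0 ≤ x → 0 ≤ y → 0 ≤ f x y) (hs0 : 0 ≤ s0)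
    (v : ℕ → ℝ) (k : ℕ) : ∀ m, ConvexOn ℝ univ (fun x => g (update v k x) m)
  | 0 => by simpa only [hg.zero] using convexOn_const s0 convex_univ
  | m + 1 => by
    have hnn := hg.nonneg hf_nonneg hs0
    simp only [hg.succ]
    by_cases hmk : m = k
    · subst hmk
      simp only [update_self, hg.update_of_le v le_rfl]
      exact (hf_cx1 _ (hnn v m)).comp_of_monotoneOn_Ici (hf_mono.curry_left (hnn v m))
        convexOn_univ_norm abs_nonneg
    · simp only [update_of_ne hmk]
      exact (hf_cx2 _ (abs_nonneg (v m))).comp_of_monotoneOn_Ici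
        (hf_mono.curry_right (abs_nonneg (v m)))
        (hg.convexOn_update hf_mono hf_cx1 hf_cx2 hf_nonneg hs0 v k m) fun x => hnn _ m

lemma measurable (hg : IsVolatility f s0 g)
    (hf : ContinuousOn (fun p : ℝ × ℝ => f p.1 p.2) (Set.Ici 0 ×ˢ Set.Ici 0))
    (hf_nonneg : ∀ x y, 0 ≤ x → 0 ≤ y → 0 ≤ f x y) (hs0 : 0 ≤ s0) :
    ∀ m, Measurable fun v : ℕ → ℝ => g v m
  | 0 => by simp only [hg.zero]; exact measurable_const
  | m + 1 => by
    simp only [hg.succ]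
    exact hf.domRestrict.measurable.comp
      ((((measurable_pi_apply m).abs).prodMk (hg.measurable hf hf_nonneg hs0 m)).subtype_mk
        (h := fun v => mk_mem_prod (Set.mem_Ici.2 (abs_nonneg _))
          (Set.mem_Ici.2 (hg.nonneg hf_nonneg hs0 v m))))

end IsVolatility

def observations (g : (ℕ → ℝ) → ℕ → ℝ) (n : ℕ) (v : ℕ → ℝ) : Fin (n + 1) → ℝ :=
  fun j => g v j * v j

section Observations

variable {f : ℝ → ℝ → ℝ} {s0 : ℝ} {g : (ℕ → ℝ) → ℕ → ℝ} {n : ℕ}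

lemma IsVolatility.observations_signFlip (hg : IsVolatility f s0 g) (s : Finset (Fin (n + 1)))
    (v : ℕ → ℝ) :
    observations g n (signFlip (s.map Fin.valEmbedding) v) = signFlip s (observations g n v) := by
  ext j
  have hgj : g (signFlip (s.map Fin.valEmbedding) v) j = g v j :=
    hg.congr_abs fun i _ => abs_signFlip_apply _ v i
  by_cases hj : j ∈ s <;> simp [observations, hgj, hj, Fin.val_inj]

theorem IsVolatility.convexOn_sum_signFlip_observations (hg : IsVolatility f s0 g)
    (hf_mono : MonotoneOn (fun p : ℝ × ℝ => f p.1 p.2) (Set.Ici 0 ×ˢ Set.Ici 0))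
    (hf_cx1 : ∀ y ∈ Set.Ici (0:ℝ), ConvexOn ℝ (Set.Ici 0) (fun x => f x y))
    (hf_cx2 : ∀ x ∈ Set.Ici (0:ℝ), ConvexOn ℝ (Set.Ici 0) (fun y => f x y))
    (hf_nonneg : ∀ x y, 0 ≤ x → 0 ≤ y → 0 ≤ f x y) (hs0 : 0 ≤ s0)
    {φ : (Fin (n + 1) → ℝ) → ℝ} (hφ : ConvexOn ℝ univ φ) (k : Fin (n + 1)) (v : ℕ → ℝ) :
    ConvexOn ℝ univ (fun x => ∑ s ∈ (univ.erase k).powerset,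
      φ (signFlip s (observations g n (update v k x)))) := by
  have hnn := hg.nonneg hf_nonneg hs0
  refine hφ.sum_signFlip_comp (fun a b θ η hθ hη hθη i hi => ?_) (fun a b θ η _ _ _ i hi => ?_)
  · have hik : (i : ℕ) ≠ k := Fin.val_ne_of_ne (ne_of_mem_erase hi)
    have hconv := (hg.convexOn_update hf_mono hf_cx1 hf_cx2 hf_nonneg hs0 v k i).2
      (mem_univ a) (mem_univ b) hθ hη hθη
    simp only [smul_eq_mul] at hconv
    have hcomb : 0 ≤ θ * g (update v k a) i + η * g (update v k b) i :=
      add_nonneg (mul_nonneg hθ (hnn _ _)) (mul_nonneg hη (hnn _ _))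
    simp only [observations, update_of_ne hik]
    calc |g (update v k (θ * a + η * b)) i * v i|
        = g (update v k (θ * a + η * b)) i * |v i| := by rw [abs_mul, abs_of_nonneg (hnn _ _)]
      _ ≤ (θ * g (update v k a) i + η * g (update v k b) i) * |v i| := by gcongr
      _ = |θ * (g (update v k a) i * v i) + η * (g (update v k b) i * v i)| := by
        rw [← abs_of_nonneg hcomb, ← abs_mul]; ring_nf
  · obtain rfl : i = k := by simpa using hi
    simp only [observations, update_self, hg.update_of_le v le_rfl]
    ring

lemma IsVolatility.identDistrib_signFlip_observations {Ω : Type*} [MeasurableSpace Ω]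
    {μ : Measure Ω} {ε : ℕ → Ω → ℝ} (hg : IsVolatility f s0 g)
    (hgm : ∀ m, Measurable fun v : ℕ → ℝ => g v m)
    (hεmeas : ∀ j, Measurable (ε j)) (hindep : iIndepFun ε μ)
    (hsymm : ∀ j, Measure.map (ε j) μ = Measure.map (fun ω => -(ε j ω)) μ)
    {φ : (Fin (n + 1) → ℝ) → ℝ} (hφ : Measurable φ) {k : Fin (n + 1)}
    {s : Finset (Fin (n + 1))} (hks : k ∉ s) (x : ℝ) :
    IdentDistrib (fun ω => φ (signFlip s (observations g n (update (fun i => ε i ω) k x))))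
      (fun ω => φ (observations g n (update (fun i => ε i ω) k x))) μ μ := by
  have hobs : Measurable (observations g n) :=
    measurable_pi_lambda _ fun j => (hgm j).mul (measurable_pi_apply _)
  have hF : Measurable fun v => φ (observations g n (update v k x)) :=
    hφ.comp (hobs.comp measurable_update_left)
  have hkS : (k : ℕ) ∉ s.map Fin.valEmbedding := by simpa [Fin.val_inj] using hks
  have hflip : (fun ω => φ (signFlip s (observations g n (update (fun i => ε i ω) k x)))) =
      (fun v => φ (observations g n (update v k x))) ∘
        fun ω => signFlip (s.map Fin.valEmbedding) (fun i => ε i ω) := by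
    ext ω
    rw [comp_apply, ← signFlip_update_of_notMem hkS, hg.observations_signFlip]
  rw [hflip]
  exact (identDistrib_signFlip hεmeas hindep hsymm _).comp hF

end Observations

theorem stmt14_general {Ω : Type*} [MeasurableSpace Ω] (μ : Measure Ω)
    (f : ℝ → ℝ → ℝ)
    (hf_mono : MonotoneOn (fun p : ℝ × ℝ => f p.1 p.2) (Set.Ici 0 ×ˢ Set.Ici 0))
    (hf_cx1 : ∀ y ∈ Set.Ici (0:ℝ), ConvexOn ℝ (Set.Ici (0:ℝ)) (fun x => f x y))
    (hf_cx2 : ∀ x ∈ Set.Ici (0:ℝ), ConvexOn ℝ (Set.Ici (0:ℝ)) (fun y => f x y))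
    (hf_nonneg : ∀ x y, 0 ≤ x → 0 ≤ y → 0 ≤ f x y)
    (ε : ℕ → Ω → ℝ) (hεmeas : ∀ j, Measurable (ε j))
    (hindep : iIndepFun ε μ)
    (hsymm : ∀ j, Measure.map (ε j) μ = Measure.map (fun ω => -(ε j ω)) μ)
    (n k : ℕ) (hk : k ≤ n)
    (s0 : ℝ) (hs0 : 0 ≤ s0)
    (φ : (Fin (n + 1) → ℝ) → ℝ) (hφcx : ConvexOn ℝ univ φ)
    -- the volatility functional: `g v j = σ_j` when the innovations take the values `v`
    (g : (ℕ → ℝ) → ℕ → ℝ)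
    (hg0 : ∀ v, g v 0 = s0)
    (hgrec : ∀ v j, g v (j + 1) = f |v j| (g v j))
    -- the innovation vector with `ε_k` replaced by the constant `x`
    (inn : ℝ → Ω → ℕ → ℝ)
    (hinn : ∀ x ω j, inn x ω j = if j = k then x else ε j ω)
    (hint : ∀ x : ℝ,
      Integrable (fun ω => φ (fun j : Fin (n + 1) => g (inn x ω) j * inn x ω j)) μ) :
    ConvexOn ℝ univ (fun x =>
      ∫ ω, φ (fun j : Fin (n + 1) => g (inn x ω) j * inn x ω j) ∂μ) := by
  let k' : Fin (n + 1) := ⟨k, Nat.lt_succ_of_le hk⟩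
  let T := (univ : Finset (Fin (n + 1))).erase k'
  have hg : IsVolatility f s0 g := ⟨hg0, hgrec⟩
  have hinn' : ∀ x ω, inn x ω = update (fun i => ε i ω) k' x :=
    fun x ω => funext fun j => by rw [hinn, update_apply]
  simp only [hinn'] at hint ⊢
  have hsame : ∀ x, ∀ s ∈ T.powerset, IdentDistrib
      (fun ω => φ (signFlip s (observations g n (update (fun i => ε i ω) k' x))))
      (fun ω => φ (observations g n (update (fun i => ε i ω) k' x))) μ μ :=
    fun x s hs => hg.identDistrib_signFlip_observations
      (hg.measurable (continuousOn_uncurry_of_monotoneOn_of_convexOn hf_mono hf_cx1 hf_cx2)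
        hf_nonneg hs0) hεmeas hindep hsymm
      (continuousOn_univ.1 (hφcx.continuousOn isOpen_univ)).measurable
      (fun h => notMem_erase k' _ (mem_powerset.1 hs h)) x
  have hint' : ∀ x, ∀ s ∈ T.powerset, Integrable
      (fun ω => φ (signFlip s (observations g n (update (fun i => ε i ω) k' x)))) μ :=
    fun x s hs => (hsame x s hs).integrable_iff.2 (hint x)
  have hconv := integral_convexOn_of_integrand_ae (μ := μ) convex_univ
    (ae_of_all _ fun ω => hg.convexOn_sum_signFlip_observations hf_mono hf_cx1 hf_cx2
      hf_nonneg hs0 hφcx k' fun i => ε i ω)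
    fun x _ => integrable_finsetSum _ (hint' x)
  have hcard : (0 : ℝ) < #T.powerset := by exact_mod_cast card_pos.2 (powerset_nonempty T)
  refine (hconv.smul (inv_nonneg.2 hcard.le)).congr fun x _ => ?_
  dsimp only
  rw [integral_finsetSum _ (hint' x), sum_congr rfl fun s hs => (hsame x s hs).integral_eq,
    sum_const, nsmul_eq_mul, smul_eq_mul, inv_mul_cancel_left₀ hcard.ne']
  rfl

/-- in model M1 with independent symmetric innovations, for `φ : ℝ^{n+1} → ℝ`
supermodular and convex, the function `h_k(x) = E[φ(X₀, …, X_n) | ε_k = x]` is convex in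
`x`.  Here `X_j = σ_j ε_j`, `σ₀ = s₀`, `σ_{j+1} = f(|ε_j|, σ_j)`; by independence the
conditional expectation is obtained by substituting the constant `x` for `ε_k` and
integrating over the other innovations. -/
theorem stmt14 {Ω : Type*} [MeasurableSpace Ω] (μ : Measure Ω) [IsProbabilityMeasure μ]
    (f : ℝ → ℝ → ℝ)
    (hf_mono : MonotoneOn (fun p : ℝ × ℝ => f p.1 p.2) (Set.Ici 0 ×ˢ Set.Ici 0))
    (hf_cx1 : ∀ y ∈ Set.Ici (0:ℝ), ConvexOn ℝ (Set.Ici (0:ℝ)) (fun x => f x y))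
    (hf_cx2 : ∀ x ∈ Set.Ici (0:ℝ), ConvexOn ℝ (Set.Ici (0:ℝ)) (fun y => f x y))
    (hf_nonneg : ∀ x y, 0 ≤ x → 0 ≤ y → 0 ≤ f x y)
    (ε : ℕ → Ω → ℝ) (hεmeas : ∀ j, Measurable (ε j))
    (hindep : iIndepFun ε μ)
    (hsymm : ∀ j, Measure.map (ε j) μ = Measure.map (fun ω => -(ε j ω)) μ)
    (n k : ℕ) (hk : k ≤ n)
    (s0 : ℝ) (hs0 : 0 ≤ s0)
    (φ : (Fin (n + 1) → ℝ) → ℝ) (hφcx : ConvexOn ℝ univ φ) (hφsm : Supermodular φ)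
    -- the volatility functional: `g v j = σ_j` when the innovations take the values `v`
    (g : (ℕ → ℝ) → ℕ → ℝ)
    (hg0 : ∀ v, g v 0 = s0)
    (hgrec : ∀ v j, g v (j + 1) = f |v j| (g v j))
    -- the innovation vector with `ε_k` replaced by the constant `x`
    (inn : ℝ → Ω → ℕ → ℝ)
    (hinn : ∀ x ω j, inn x ω j = if j = k then x else ε j ω)
    (hint : ∀ x : ℝ,
      Integrable (fun ω => φ (fun j : Fin (n + 1) => g (inn x ω) j * inn x ω j)) μ) :
    ConvexOn ℝ univ (fun x =>
      ∫ ω, φ (fun j : Fin (n + 1) => g (inn x ω) j * inn x ω j) ∂μ) :=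
  stmt14_general μ f hf_mono hf_cx1 hf_cx2 hf_nonneg ε hεmeas hindep hsymm n k hk s0 hs0 φ hφcx g
    hg0 hgrec inn hinn hint
end
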